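/- arXiv:2406.07324 — 13 statements merged into one kernel-verified Lean document; each statement's English description precedes it below -/
import Mathlib

section
/- If the discrete-time linear system x_{k+1} = A x_k, y_k = C x_k (with A an n×n real matrix and C a p×n real matrix) is asymptotically stable (i.e., for every initial state x₀ ∈ ℝⁿ the trajectory Aᵏx₀ tends to 0 as k → ∞) and observable (i.e., for every nonzero x₀ ∈ ℝⁿ there exists a natural number k with C Aᵏ x₀ ≠ 0), then there exists a symmetric positive definite n×n real matrix Q satisfying the discrete Lyapunov equation AᵀQA − Q + CᵀC = 0. -/
/-!
Stability forces `‖A ^ m‖ < 1` for some `m` in any submultiplicative norm, so the powers of `A`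
decay geometrically and the observability Gramian `Q = ∑ₖ (Aᵀ)ᵏ CᵀC Aᵏ` converges. Shifting the
summation index gives `AᵀQA + CᵀC = Q`, and `xᵀQx = ∑ₖ ‖C Aᵏ x‖²`, which observability makes
positive for `x ≠ 0`.
-/

open Filter Matrix Topology

theorem summable_norm_pow_of_norm_pow_lt_one {R : Type*} [NormedRing R] {a : R} {m : ℕ}
    [NeZero m] (ha : ‖a ^ m‖ < 1) : Summable fun k => ‖a ^ k‖ := by
  rw [← (Nat.residueClassesEquiv m).symm.summable_iff, Function.comp_def]
  refine (summable_prod_of_nonneg fun _ => norm_nonneg _).2 ⟨fun r => ?_, .of_finite⟩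
  refine .of_nonneg_of_le (fun _ => norm_nonneg _) (fun j => ?_)
    ((summable_norm_geometric_of_norm_lt_one ha).mul_right ‖a ^ r.val‖)
  calc ‖a ^ (r.val + m * j)‖ = ‖(a ^ m) ^ j * a ^ r.val‖ := by
        rw [← pow_mul, ← pow_add, add_comm]
    _ ≤ _ := norm_mul_le _ _

theorem summable_norm_pow_of_tendsto_pow {R : Type*} [NormedRing R] {a : R}
    (h : Tendsto (fun k => a ^ k) atTop (𝓝 0)) : Summable fun k => ‖a ^ k‖ := by
  obtain ⟨m, hm, ha⟩ := ((eventually_gt_atTop 0).and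
    (h.norm.eventually_lt_const (by simpa using zero_lt_one))).exists
  have : NeZero m := ⟨hm.ne'⟩
  exact summable_norm_pow_of_norm_pow_lt_one ha

theorem summable_pow_mul_mul_pow {R : Type*} [NormedRing R] [CompleteSpace R] {a b : R}
    (ha : Tendsto (fun k => a ^ k) atTop (𝓝 0)) (hb : Tendsto (fun k => b ^ k) atTop (𝓝 0))
    (c : R) : Summable fun k => b ^ k * c * a ^ k := by
  obtain ⟨K, hK⟩ := hb.norm.bddAbove_range
  refine .of_norm_bounded ((summable_norm_pow_of_tendsto_pow ha).mul_left (K * ‖c‖)) fun k => ?_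
  calc ‖b ^ k * c * a ^ k‖ ≤ ‖b ^ k‖ * ‖c‖ * ‖a ^ k‖ := norm_mul₃_le
    _ ≤ K * ‖c‖ * ‖a ^ k‖ := by gcongr; exact hK ⟨k, rfl⟩

theorem Matrix.summable_pow_mul_mul_pow {n α : Type*} [Fintype n] [DecidableEq n] [NormedRing α]
    [CompleteSpace α] {A B : Matrix n n α} (hA : Tendsto (fun k => A ^ k) atTop (𝓝 0))
    (hB : Tendsto (fun k => B ^ k) atTop (𝓝 0)) (M : Matrix n n α) :
    Summable fun k => B ^ k * M * A ^ k :=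
  -- any submultiplicative norm inducing the entrywise topology will do
  @_root_.summable_pow_mul_mul_pow _ Matrix.linftyOpNormedRing (Matrix.instCompleteSpace n n α)
    _ _ hA hB M

theorem Summable.mul_tsum_pow_mul_mul_pow_add {R : Type*} [Ring R] [TopologicalSpace R]
    [IsTopologicalRing R] [T2Space R] {a b c : R} (h : Summable fun k => b ^ k * c * a ^ k) :
    b * (∑' k, b ^ k * c * a ^ k) * a + c = ∑' k, b ^ k * c * a ^ k := by
  conv_rhs => rw [h.tsum_eq_zero_add]
  rw [← h.tsum_mul_left, ← (h.mul_left b).tsum_mul_right, pow_zero, pow_zero, one_mul, mul_one,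
    add_comm]
  congr 1
  exact tsum_congr fun k => by rw [pow_succ' b, pow_succ a]; simp only [mul_assoc]

theorem Matrix.tendsto_of_forall_tendsto_mulVec {ι m n R : Type*} [Fintype n] [DecidableEq n]
    [NonAssocSemiring R] [TopologicalSpace R] {l : Filter ι} {f : ι → Matrix m n R}
    {B : Matrix m n R} (h : ∀ v, Tendsto (fun k => f k *ᵥ v) l (𝓝 (B *ᵥ v))) :
    Tendsto f l (𝓝 B) := by
  refine tendsto_pi_nhds.2 fun i => tendsto_pi_nhds.2 fun j => ?_
  simpa [mulVec_single_one] using tendsto_pi_nhds.1 (h (Pi.single j 1)) i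

theorem HasSum.dotProduct_mulVec {ι m n R : Type*} [Fintype m] [Fintype n]
    [NonUnitalNonAssocSemiring R] [TopologicalSpace R] [IsTopologicalSemiring R]
    {f : ι → Matrix m n R} {a : Matrix m n R} (hf : HasSum f a) (v : m → R) (w : n → R) :
    HasSum (fun k => v ⬝ᵥ (f k *ᵥ w)) (v ⬝ᵥ (a *ᵥ w)) := by
  simp only [dotProduct, mulVec, Finset.mul_sum]
  exact hasSum_sum fun i _ => hasSum_sum fun j _ =>
    ((Pi.hasSum.1 (Pi.hasSum.1 hf i) j).mul_right (w j)).mul_left (v i)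

theorem Matrix.PosDef.of_hasSum_transpose_mul_self {ι m n : Type*} [Fintype m] [Fintype n]
    {G : ι → Matrix m n ℝ} {Q : Matrix n n ℝ} (hQ : HasSum (fun k => (G k)ᵀ * G k) Q)
    (hG : ∀ x ≠ 0, ∃ k, G k *ᵥ x ≠ 0) : Q.PosDef := by
  refine posDef_iff_dotProduct_mulVec.2 ⟨?_, fun x hx => ?_⟩
  · have hQt := hQ.matrix_transpose
    simp only [transpose_mul, transpose_transpose] at hQt
    exact (conjTranspose_eq_transpose_of_trivial Q).trans (hQt.unique hQ)
  · obtain ⟨k, hk⟩ := hG x hx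
    have hquad : HasSum (fun j => (G j *ᵥ x) ⬝ᵥ (G j *ᵥ x)) (x ⬝ᵥ (Q *ᵥ x)) := by
      simpa only [← mulVec_mulVec, dotProduct_mulVec _ (G _)ᵀ, vecMul_transpose]
        using hQ.dotProduct_mulVec x x
    rw [star_trivial]
    calc 0 < (G k *ᵥ x) ⬝ᵥ (G k *ᵥ x) := by simpa using dotProduct_star_self_pos_iff.2 hk
      _ ≤ x ⬝ᵥ (Q *ᵥ x) := le_hasSum hquad k fun j _ => by
        simpa using dotProduct_star_self_nonneg (G j *ᵥ x)

/-- If the discrete-time linear system `x_{k+1} = A x_k`, `y_k = C x_k` is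
asymptotically stable and observable, then there exists a symmetric positive
definite matrix `Q` satisfying `AᵀQA − Q + CᵀC = 0`. -/
theorem stmt_0 {n p : ℕ} (A : Matrix (Fin n) (Fin n) ℝ) (C : Matrix (Fin p) (Fin n) ℝ)
    (hstab : ∀ x₀ : Fin n → ℝ,
      Tendsto (fun k : ℕ => (A ^ k) *ᵥ x₀) atTop (nhds 0))
    (hobs : ∀ x₀ : Fin n → ℝ, x₀ ≠ 0 → ∃ k : ℕ, C *ᵥ ((A ^ k) *ᵥ x₀) ≠ 0) :
    ∃ Q : Matrix (Fin n) (Fin n) ℝ, Q.PosDef ∧ Aᵀ * Q * A - Q + Cᵀ * C = 0 := by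
  have hA : Tendsto (fun k => A ^ k) atTop (𝓝 0) :=
    Matrix.tendsto_of_forall_tendsto_mulVec fun v => by simpa using hstab v
  have hAt : Tendsto (fun k => Aᵀ ^ k) atTop (𝓝 0) := by
    simpa [Function.comp_def] using (continuous_id.matrix_transpose.tendsto 0).comp hA
  have hsum := Matrix.summable_pow_mul_mul_pow hA hAt (Cᵀ * C)
  have hterm : ∀ k, (C * A ^ k)ᵀ * (C * A ^ k) = Aᵀ ^ k * (Cᵀ * C) * A ^ k := fun k => by
    rw [transpose_mul, transpose_pow]; simp only [Matrix.mul_assoc]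
  refine ⟨∑' k, Aᵀ ^ k * (Cᵀ * C) * A ^ k, ?_, ?_⟩
  · refine .of_hasSum_transpose_mul_self (G := fun k => C * A ^ k) ?_ fun x hx => ?_
    · simpa only [hterm] using hsum.hasSum
    · simpa [mulVec_mulVec] using hobs x hx
  · rw [sub_add_eq_add_sub, hsum.mul_tsum_pow_mul_mul_pow_add, sub_self]
end

section
/- If the discrete-time linear system x_{k+1} = A x_k, y_k = C x_k is observable and there exists a symmetric positive definite n×n real matrix Q satisfying AᵀQA − Q + CᵀC = 0, then the system is asymptotically stable: for every x₀ ∈ ℝⁿ, Aᵏx₀ → 0 as k → ∞. -/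
/-!
`V x = xᵀ Q x` is a Lyapunov function: the equation gives `V (A x) = V x - ‖C x‖²`, so `V`
decreases along every trajectory and converges to some `L`. Since `Q` is positive definite, `V`
dominates `c ‖x‖²`, so the trajectory is bounded and has a limit point `z`. By continuity
`V (Aᵐ z) = L` for every `m`, hence `C Aᵐ z = 0` for every `m`, and observability forces `z = 0`,
i.e. `L = 0`. Then `‖Aᵏ x‖² ≤ V (Aᵏ x) / c → 0`.
-/

open Filter Matrix Metric Topology

variable {ι κ : Type*} [Fintype ι] [Fintype κ]

theorem Matrix.PosDef.exists_pos_mul_norm_sq_le {Q : Matrix ι ι ℝ} (hQ : Q.PosDef) :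
    ∃ c > 0, ∀ x : ι → ℝ, c * ‖x‖ ^ 2 ≤ x ⬝ᵥ (Q *ᵥ x) := by
  cases isEmpty_or_nonempty ι
  · exact ⟨1, one_pos, fun x => by simp [Subsingleton.elim x 0]⟩
  have hV : Continuous fun x : ι → ℝ => x ⬝ᵥ (Q *ᵥ x) :=
    continuous_id.dotProduct (continuous_const.matrix_mulVec continuous_id)
  obtain ⟨u, hu, hmin⟩ := (isCompact_sphere (0 : ι → ℝ) 1).exists_isMinOn
    (NormedSpace.sphere_nonempty.2 zero_le_one) hV.continuousOn
  rw [mem_sphere_zero_iff_norm] at hu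
  refine ⟨u ⬝ᵥ (Q *ᵥ u), hQ.dotProduct_mulVec_pos (by rintro rfl; simp at hu),
    fun x => ?_⟩
  rcases eq_or_ne x 0 with rfl | hx
  · simp
  have hx' : ‖x‖ ≠ 0 := norm_ne_zero_iff.2 hx
  have hmem : ‖x‖⁻¹ • x ∈ sphere (0 : ι → ℝ) 1 := by
    rw [mem_sphere_zero_iff_norm, norm_smul, norm_inv, norm_norm, inv_mul_cancel₀ hx']
  have hscale :
      x ⬝ᵥ (Q *ᵥ x) = ‖x‖ ^ 2 * ((‖x‖⁻¹ • x) ⬝ᵥ (Q *ᵥ (‖x‖⁻¹ • x))) := by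
    simp only [mulVec_smul, smul_dotProduct, dotProduct_smul, smul_eq_mul]
    field_simp
  rw [hscale, mul_comm]
  exact mul_le_mul_of_nonneg_left (hmin hmem) (sq_nonneg _)

theorem Matrix.PosDef.tendsto_zero_of_tendsto_dotProduct_mulVec {Q : Matrix ι ι ℝ}
    (hQ : Q.PosDef) {α : Type*} {l : Filter α} {f : α → ι → ℝ}
    (hf : Tendsto (fun a => f a ⬝ᵥ (Q *ᵥ f a)) l (𝓝 0)) : Tendsto f l (𝓝 0) := by
  obtain ⟨c, hc, hle⟩ := hQ.exists_pos_mul_norm_sq_le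
  have hbound : ∀ a, ‖f a‖ ≤ √(f a ⬝ᵥ (Q *ᵥ f a) / c) := fun a =>
    Real.le_sqrt_of_sq_le ((le_div_iff₀ hc).2 (by linarith [hle (f a)]))
  have hsqrt : Tendsto (fun a => √(f a ⬝ᵥ (Q *ᵥ f a) / c)) l (𝓝 0) := by
    simpa using (hf.div_const c).sqrt
  exact tendsto_zero_iff_norm_tendsto_zero.2
    (squeeze_zero (fun _ => norm_nonneg _) hbound hsqrt)

theorem dotProduct_mulVec_mulVec_of_lyapunov {A Q : Matrix ι ι ℝ} {C : Matrix κ ι ℝ}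
    (h : Aᵀ * Q * A - Q + Cᵀ * C = 0) (x : ι → ℝ) :
    (A *ᵥ x) ⬝ᵥ (Q *ᵥ (A *ᵥ x)) = x ⬝ᵥ (Q *ᵥ x) - (C *ᵥ x) ⬝ᵥ (C *ᵥ x) := by
  have hx := congrArg (fun M => x ⬝ᵥ (M *ᵥ x)) h
  simp only [add_mulVec, sub_mulVec, zero_mulVec, dotProduct_add, dotProduct_sub,
    dotProduct_zero, ← mulVec_mulVec, dotProduct_mulVec x Aᵀ, dotProduct_mulVec x Cᵀ,
    vecMul_transpose] at hx
  linarith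

section Trajectory

variable [DecidableEq ι] {A : Matrix ι ι ℝ}

theorem apply_pow_mulVec_eq_of_tendsto_subseq {V : (ι → ℝ) → ℝ} (hV : Continuous V)
    {x z : ι → ℝ} {L : ℝ} {φ : ℕ → ℕ} (hφ : StrictMono φ)
    (hz : Tendsto (fun j => A ^ φ j *ᵥ x) atTop (𝓝 z))
    (hL : Tendsto (fun k => V (A ^ k *ᵥ x)) atTop (𝓝 L)) (m : ℕ) : V (A ^ m *ᵥ z) = L := by
  have hshift : Tendsto (fun j => V (A ^ (m + φ j) *ᵥ x)) atTop (𝓝 L) :=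
    hL.comp (tendsto_atTop_mono (fun j => Nat.le_add_left _ m) hφ.tendsto_atTop)
  have hlim : Tendsto (fun j => V (A ^ (m + φ j) *ᵥ x)) atTop (𝓝 (V (A ^ m *ᵥ z))) := by
    simp only [pow_add, ← mulVec_mulVec]
    exact (hV.tendsto _).comp
      ((continuous_const.matrix_mulVec continuous_id).tendsto _ |>.comp hz)
  exact tendsto_nhds_unique hlim hshift

variable {C : Matrix κ ι ℝ} {Q : Matrix ι ι ℝ}

theorem antitone_dotProduct_mulVec_pow_mulVec_of_lyapunov (h : Aᵀ * Q * A - Q + Cᵀ * C = 0)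
    (x : ι → ℝ) : Antitone fun k => (A ^ k *ᵥ x) ⬝ᵥ (Q *ᵥ (A ^ k *ᵥ x)) :=
  antitone_nat_of_succ_le fun k => by
    rw [pow_succ', ← mulVec_mulVec, dotProduct_mulVec_mulVec_of_lyapunov h]
    exact sub_le_self _ (Fintype.sum_nonneg fun _ => mul_self_nonneg _)

theorem tendsto_dotProduct_mulVec_pow_mulVec_zero (hQ : Q.PosDef)
    (h : Aᵀ * Q * A - Q + Cᵀ * C = 0)
    (hobs : ∀ z : ι → ℝ, z ≠ 0 → ∃ k : ℕ, C *ᵥ (A ^ k *ᵥ z) ≠ 0) (x : ι → ℝ) :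
    Tendsto (fun k => (A ^ k *ᵥ x) ⬝ᵥ (Q *ᵥ (A ^ k *ᵥ x))) atTop (𝓝 0) := by
  set V : (ι → ℝ) → ℝ := fun y => y ⬝ᵥ (Q *ᵥ y)
  have hV : Continuous V := continuous_id.dotProduct (continuous_const.matrix_mulVec continuous_id)
  have hanti := antitone_dotProduct_mulVec_pow_mulVec_of_lyapunov h x
  have hL : Tendsto (fun k => V (A ^ k *ᵥ x)) atTop (𝓝 (⨅ k, V (A ^ k *ᵥ x))) :=
    tendsto_atTop_ciInf hanti
      ⟨0, by rintro _ ⟨k, rfl⟩; exact hQ.posSemidef.dotProduct_mulVec_nonneg _⟩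
  obtain ⟨c, hc, hle⟩ := hQ.exists_pos_mul_norm_sq_le
  have hbdd : ∀ k, A ^ k *ᵥ x ∈ closedBall 0 √(V x / c) := fun k => by
    refine mem_closedBall_zero_iff.2 (Real.le_sqrt_of_sq_le ((le_div_iff₀ hc).2 ?_))
    have := hanti (Nat.zero_le k)
    simp only [pow_zero, one_mulVec] at this
    linarith [hle (A ^ k *ᵥ x)]
  obtain ⟨z, -, φ, hφ, hz⟩ := tendsto_subseq_of_bounded isBounded_closedBall hbdd
  have hinv := apply_pow_mulVec_eq_of_tendsto_subseq hV hφ hz hL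
  have hz0 : z = 0 := by
    by_contra hne
    obtain ⟨m, hm⟩ := hobs z hne
    have hstep := dotProduct_mulVec_mulVec_of_lyapunov h (A ^ m *ᵥ z)
    rw [mulVec_mulVec, ← pow_succ'] at hstep
    have hm1 := hinv (m + 1)
    have hm0 := hinv m
    exact hm (dotProduct_self_eq_zero.1 (by linarith))
  have h0 := hinv 0
  simp only [hz0, mulVec_zero, V, zero_dotProduct] at h0
  rwa [← h0] at hL

end Trajectory

/-- If the system `x_{k+1} = A x_k`, `y_k = C x_k` is observable and there is a
symmetric positive definite solution of `AᵀQA − Q + CᵀC = 0`, then the system is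
asymptotically stable. -/
theorem stmt_2 {n p : ℕ} (A : Matrix (Fin n) (Fin n) ℝ) (C : Matrix (Fin p) (Fin n) ℝ)
    (hobs : ∀ x₀ : Fin n → ℝ, x₀ ≠ 0 → ∃ k : ℕ, C *ᵥ ((A ^ k) *ᵥ x₀) ≠ 0)
    (hQ : ∃ Q : Matrix (Fin n) (Fin n) ℝ, Q.PosDef ∧ Aᵀ * Q * A - Q + Cᵀ * C = 0) :
    ∀ x₀ : Fin n → ℝ, Tendsto (fun k : ℕ => (A ^ k) *ᵥ x₀) atTop (nhds 0) := by
  obtain ⟨Q, hpos, hlyap⟩ := hQ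
  exact fun x₀ => hpos.tendsto_zero_of_tendsto_dotProduct_mulVec
    (tendsto_dotProduct_mulVec_pow_mulVec_zero hpos hlyap hobs x₀)
end

section
/- If the discrete-time linear system x_{k+1} = A x_k + B u_k (with A an n×n real matrix and B an n×m real matrix) is asymptotically stable (for every x₀ ∈ ℝⁿ, Aᵏx₀ → 0 as k → ∞) and controllable (i.e., for every nonzero z ∈ ℝⁿ there exists a natural number k with Bᵀ(Aᵀ)ᵏ z ≠ 0), then there exists a symmetric positive definite n×n real matrix P satisfying the Lyapunov equation A P Aᵀ − P + B Bᵀ = 0. -/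
open Filter Matrix Topology

/-!
Stability gives `A ^ k → 0`, so in any submultiplicative norm `‖A ^ N‖ < 1` for some
`N > 0`, and `‖A ^ k‖` decays geometrically along every residue class mod `N`. Hence
`P = ∑ₖ Aᵏ B Bᵀ (Aᵀ)ᵏ` converges. Splitting off the term `k = 0` gives `P = B Bᵀ + A P Aᵀ`,
and `xᵀ P x = ∑ₖ ‖Bᵀ (Aᵀ)ᵏ x‖²`, which controllability makes positive for `x ≠ 0`.
-/

theorem summable_of_forall_summable_mul_add {G : Type*} [AddCommGroup G] [TopologicalSpace G]
    [IsTopologicalAddGroup G] (N : ℕ) [NeZero N] {f : ℕ → G}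
    (hf : ∀ r, Summable fun q ↦ f (N * q + r)) : Summable f := by
  rw [Finset.sum_indicator_mod N f, Finset.sum_fn]
  refine summable_sum fun a _ ↦ ?_
  rw [← ZMod.natCast_zmod_val a, summable_indicator_mod_iff_summable]
  exact hf _

section NormedRing

variable {R : Type*} [NormedRing R]

theorem norm_pow_mul_add_le (x : R) (N q r : ℕ) :
    ‖x ^ (N * q + r)‖ ≤ ‖x ^ N‖ ^ q * ‖x ^ r‖ := by
  induction q with
  | zero => simp
  | succ q ih =>
    calc ‖x ^ (N * (q + 1) + r)‖ = ‖x ^ N * x ^ (N * q + r)‖ := by rw [← pow_add]; ring_nf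
      _ ≤ ‖x ^ N‖ * ‖x ^ (N * q + r)‖ := norm_mul_le _ _
      _ ≤ ‖x ^ N‖ * (‖x ^ N‖ ^ q * ‖x ^ r‖) := by gcongr
      _ = ‖x ^ N‖ ^ (q + 1) * ‖x ^ r‖ := by ring

theorem summable_norm_pow_of_tendsto_pow_atTop_nhds_zero {x : R}
    (h : Tendsto (x ^ ·) atTop (𝓝 0)) : Summable (‖x ^ ·‖) := by
  obtain ⟨N, hN, hN0⟩ : ∃ N, ‖x ^ N‖ < 1 ∧ N ≠ 0 :=
    (((tendsto_zero_iff_norm_tendsto_zero.1 h).eventually (gt_mem_nhds one_pos)).and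
      (eventually_ne_atTop 0)).exists
  have : NeZero N := ⟨hN0⟩
  refine summable_of_forall_summable_mul_add N fun r ↦ ?_
  exact .of_nonneg_of_le (fun _ ↦ norm_nonneg _) (norm_pow_mul_add_le x N · r)
    ((summable_geometric_of_lt_one (norm_nonneg _) hN).mul_right _)

end NormedRing

theorem tsum_pow_mul_mul_pow_eq_add {R : Type*} [Ring R] [TopologicalSpace R]
    [IsTopologicalRing R] [T2Space R] {a m b : R} (h : Summable fun k ↦ a ^ k * m * b ^ k) :
    ∑' k, a ^ k * m * b ^ k = m + a * (∑' k, a ^ k * m * b ^ k) * b := by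
  conv_lhs => rw [h.tsum_eq_zero_add]
  rw [← h.tsum_mul_left, ← (h.mul_left a).tsum_mul_right, pow_zero, pow_zero, one_mul, mul_one]
  congr 1
  refine tsum_congr fun k ↦ ?_
  rw [pow_succ', pow_succ]
  simp only [mul_assoc]

theorem Matrix.tendsto_nhds_zero_of_forall_mulVec {α m n R : Type*} [Fintype n] [DecidableEq n]
    [NonAssocSemiring R] [TopologicalSpace R] {F : α → Matrix m n R} {l : Filter α}
    (h : ∀ v, Tendsto (fun a ↦ F a *ᵥ v) l (𝓝 0)) : Tendsto F l (𝓝 0) := by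
  refine tendsto_pi_nhds.2 fun i ↦ tendsto_pi_nhds.2 fun j ↦ ?_
  simpa [mulVec_single_one] using tendsto_pi_nhds.1 (h (Pi.single j 1)) i

section Frobenius

-- The Frobenius norm is submultiplicative and invariant under transposition.
attribute [local instance] Matrix.frobeniusNormedAddCommGroup Matrix.frobeniusNormedSpace
  Matrix.frobeniusNormedRing

theorem Matrix.summable_pow_mul_mul_transpose_pow {𝕜 ι : Type*} [RCLike 𝕜] [Fintype ι]
    [DecidableEq ι] {A : Matrix ι ι 𝕜} (hA : Tendsto (A ^ ·) atTop (𝓝 0)) (M : Matrix ι ι 𝕜) :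
    Summable fun k ↦ A ^ k * M * Aᵀ ^ k := by
  have : CompleteSpace (Matrix ι ι 𝕜) := FiniteDimensional.complete 𝕜 _
  have hs := summable_norm_pow_of_tendsto_pow_atTop_nhds_zero hA
  refine .of_norm_bounded (hs.mul_right (‖M‖ * ∑' j, ‖A ^ j‖)) fun k ↦ ?_
  calc ‖A ^ k * M * Aᵀ ^ k‖ ≤ ‖A ^ k‖ * ‖M‖ * ‖A ^ k‖ := by
        grw [norm_mul_le, norm_mul_le, ← transpose_pow, frobenius_norm_transpose]
    _ ≤ ‖A ^ k‖ * (‖M‖ * ∑' j, ‖A ^ j‖) := by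
        rw [mul_assoc]
        gcongr
        exact hs.le_tsum k fun _ _ ↦ norm_nonneg _

end Frobenius

theorem Matrix.posDef_of_hasSum_mul_transpose {ι κ X : Type*} [Fintype ι] [Fintype κ]
    {C : X → Matrix ι κ ℝ} {P : Matrix ι ι ℝ} (hP : HasSum (fun k ↦ C k * (C k)ᵀ) P)
    (hC : ∀ x, x ≠ 0 → ∃ k, (C k)ᵀ *ᵥ x ≠ 0) : P.PosDef := by
  have hherm : P.IsHermitian := by
    refine (HasSum.unique ?_ hP : Pᴴ = P)
    simpa [conjTranspose_eq_transpose_of_trivial] using hP.matrix_conjTranspose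
  refine .of_dotProduct_mulVec_pos hherm fun x hx ↦ ?_
  let q : Matrix ι ι ℝ →+ ℝ :=
    AddMonoidHom.mk' (fun M ↦ x ⬝ᵥ (M *ᵥ x)) fun M N ↦ by simp [add_mulVec, dotProduct_add]
  have hq : Continuous q :=
    continuous_const.dotProduct (continuous_id.matrix_mulVec continuous_const)
  have hterm : ∀ k, q (C k * (C k)ᵀ) = star ((C k)ᵀ *ᵥ x) ⬝ᵥ ((C k)ᵀ *ᵥ x) := fun k ↦ by
    change x ⬝ᵥ ((C k * (C k)ᵀ) *ᵥ x) = _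
    rw [star_trivial, ← mulVec_mulVec, dotProduct_mulVec, mulVec_transpose]
  obtain ⟨k, hk⟩ := hC x hx
  rw [star_trivial]
  refine hasSum_lt (f := fun _ ↦ 0) (i := k) (fun k ↦ ?_) ?_ hasSum_zero (hP.map q hq)
  · simpa only [Function.comp_apply, hterm] using dotProduct_star_self_nonneg _
  · simpa only [Function.comp_apply, hterm] using dotProduct_star_self_pos_iff.2 hk

/-- If the system `x_{k+1} = A x_k + B u_k` is asymptotically stable and controllable,
then there exists a symmetric positive definite `P` with `A P Aᵀ − P + B Bᵀ = 0`. -/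
theorem stmt_4 {n m : ℕ} (A : Matrix (Fin n) (Fin n) ℝ) (B : Matrix (Fin n) (Fin m) ℝ)
    (hstab : ∀ x₀ : Fin n → ℝ,
      Tendsto (fun k : ℕ => (A ^ k) *ᵥ x₀) atTop (nhds 0))
    (hctrb : ∀ z : Fin n → ℝ, z ≠ 0 → ∃ k : ℕ, Bᵀ *ᵥ ((Aᵀ ^ k) *ᵥ z) ≠ 0) :
    ∃ P : Matrix (Fin n) (Fin n) ℝ, P.PosDef ∧ A * P * Aᵀ - P + B * Bᵀ = 0 := by
  have hsum :=
    summable_pow_mul_mul_transpose_pow (tendsto_nhds_zero_of_forall_mulVec hstab) (B * Bᵀ)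
  refine ⟨∑' k, A ^ k * (B * Bᵀ) * Aᵀ ^ k, ?_, ?_⟩
  · have hterm : ∀ k : ℕ, A ^ k * (B * Bᵀ) * Aᵀ ^ k = (A ^ k * B) * (A ^ k * B)ᵀ := fun k ↦ by
      rw [transpose_mul, transpose_pow, Matrix.mul_assoc, Matrix.mul_assoc, Matrix.mul_assoc]
    refine posDef_of_hasSum_mul_transpose (by simpa only [hterm] using hsum.hasSum)
      fun x hx ↦ ?_
    obtain ⟨k, hk⟩ := hctrb x hx
    exact ⟨k, by rwa [transpose_mul, transpose_pow, ← mulVec_mulVec]⟩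
  · rw [sub_add_eq_add_sub, sub_eq_zero, add_comm, ← tsum_pow_mul_mul_pow_eq_add hsum]
end

section
/- If the discrete-time linear system x_{k+1} = A x_k + B u_k is controllable and there exists a symmetric positive definite n×n real matrix P satisfying A P Aᵀ − P + B Bᵀ = 0, then the system is asymptotically stable: for every x₀ ∈ ℝⁿ, Aᵏx₀ → 0 as k → ∞. -/
/-!
Along any orbit `v_k = (Aᵀ)ᵏ z` of the dual system, the Lyapunov equation gives
`V(v_{k+1}) = V(v_k) - ‖Bᵀ v_k‖²` for `V(v) = vᵀ P v ≥ 0`, so `∑ ‖Bᵀ v_k‖²` converges and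
`Bᵀ v_k → 0`; hence `Bᵀ (Aᵀ)ʲ v_k → 0` for every fixed `j`. Controllability says that
`w ↦ (Bᵀ (Aᵀ)ʲ w)_j` is an injective linear map from a finite-dimensional space into the
product space `ℕ → ℝᵐ`, hence a closed embedding, so `v_k → 0`. Transposing back gives `Aᵏ → 0`.
-/

open Filter Matrix Topology

section Observability

variable {𝕜 ι κ : Type*} [NontriviallyNormedField 𝕜] [CompleteSpace 𝕜] [Fintype ι] [DecidableEq ι]

def Matrix.observabilityMap (M : Matrix ι ι 𝕜) (N : Matrix κ ι 𝕜) :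
    (ι → 𝕜) →ₗ[𝕜] ℕ → κ → 𝕜 :=
  LinearMap.pi fun k => N.mulVecLin ∘ₗ (M ^ k).mulVecLin

theorem Matrix.tendsto_pow_mulVec_of_tendsto_outputs {M : Matrix ι ι 𝕜} {N : Matrix κ ι 𝕜}
    (hobs : ∀ z : ι → 𝕜, z ≠ 0 → ∃ k : ℕ, N *ᵥ (M ^ k *ᵥ z) ≠ 0) (z : ι → 𝕜)
    (hout : Tendsto (fun k => N *ᵥ (M ^ k *ᵥ z)) atTop (𝓝 0)) :
    Tendsto (fun k => M ^ k *ᵥ z) atTop (𝓝 0) := by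
  have hker : LinearMap.ker (M.observabilityMap N) = ⊥ := by
    refine LinearMap.ker_eq_bot'.2 fun w hw => by_contra fun hne => ?_
    obtain ⟨k, hk⟩ := hobs w hne
    exact hk (congrFun hw k)
  rw [(LinearMap.isClosedEmbedding_of_injective hker).tendsto_nhds_iff, map_zero,
    tendsto_pi_nhds]
  intro j
  have hshift : ∀ k, M.observabilityMap N (M ^ k *ᵥ z) j = N *ᵥ (M ^ (k + j) *ᵥ z) := fun k => by
    simp [observabilityMap, mulVec_mulVec, ← pow_add, add_comm]
  simpa only [Function.comp_def, hshift, Pi.zero_apply] using hout.comp (tendsto_add_atTop_nat j)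

end Observability

theorem Matrix.tendsto_pow_mulVec_of_transpose {R ι : Type*} [CommSemiring R] [TopologicalSpace R]
    [IsTopologicalSemiring R] [Fintype ι] [DecidableEq ι] {M : Matrix ι ι R}
    (h : ∀ z : ι → R, Tendsto (fun k => Mᵀ ^ k *ᵥ z) atTop (𝓝 0)) (x : ι → R) :
    Tendsto (fun k => M ^ k *ᵥ x) atTop (𝓝 0) := by
  have hpow : Tendsto (fun k => Mᵀ ^ k) atTop (𝓝 0) :=
    tendsto_pi_nhds.2 fun i => tendsto_pi_nhds.2 fun j => by
      simpa [mulVec_single_one] using tendsto_pi_nhds.1 (h (Pi.single j 1)) i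
  have htr := (continuous_id.matrix_transpose.tendsto 0).comp hpow
  simpa [Function.comp_def, ← transpose_pow] using
    ((continuous_id.matrix_mulVec continuous_const).tendsto (0 : Matrix ι ι R)).comp htr

theorem tendsto_zero_of_tendsto_dotProduct_self {ι α : Type*} [Fintype ι] {l : Filter α}
    {w : α → ι → ℝ} (h : Tendsto (fun a => w a ⬝ᵥ w a) l (𝓝 0)) : Tendsto w l (𝓝 0) := by
  refine tendsto_pi_nhds.2 fun i => squeeze_zero_norm (fun a => ?_) (by
    simpa using (Real.continuous_sqrt.tendsto 0).comp h)
  rw [Real.norm_eq_abs]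
  refine Real.abs_le_sqrt ?_
  simpa [sq, dotProduct] using
    Finset.single_le_sum (fun j _ => mul_self_nonneg (w a j)) (Finset.mem_univ i)

section Lyapunov

variable {R ι κ : Type*} [CommRing R] [Fintype ι] [Fintype κ]

theorem Matrix.dotProduct_mul_mul_transpose_mulVec (M : Matrix ι κ R) (Q : Matrix κ κ R)
    (v : ι → R) : v ⬝ᵥ ((M * Q * Mᵀ) *ᵥ v) = (Mᵀ *ᵥ v) ⬝ᵥ (Q *ᵥ (Mᵀ *ᵥ v)) := by
  rw [← mulVec_mulVec, ← mulVec_mulVec, dotProduct_mulVec, ← mulVec_transpose]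

theorem Matrix.lyapunov_step {A P : Matrix ι ι R} {B : Matrix ι κ R}
    (h : A * P * Aᵀ - P + B * Bᵀ = 0) (v : ι → R) :
    (Aᵀ *ᵥ v) ⬝ᵥ (P *ᵥ (Aᵀ *ᵥ v)) + (Bᵀ *ᵥ v) ⬝ᵥ (Bᵀ *ᵥ v) = v ⬝ᵥ (P *ᵥ v) := by
  have hB : v ⬝ᵥ ((B * Bᵀ) *ᵥ v) = (Bᵀ *ᵥ v) ⬝ᵥ (Bᵀ *ᵥ v) := by
    rw [← mulVec_mulVec, dotProduct_mulVec, ← mulVec_transpose]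
  have := congrArg (fun X => v ⬝ᵥ (X *ᵥ v)) h
  simp only [add_mulVec, sub_mulVec, dotProduct_add, dotProduct_sub, zero_mulVec, dotProduct_zero,
    dotProduct_mul_mul_transpose_mulVec, hB] at this
  linear_combination this

theorem Matrix.lyapunov_telescope [DecidableEq ι] {A P : Matrix ι ι R} {B : Matrix ι κ R}
    (h : A * P * Aᵀ - P + B * Bᵀ = 0) (z : ι → R) (k : ℕ) :
    (Aᵀ ^ k *ᵥ z) ⬝ᵥ (P *ᵥ (Aᵀ ^ k *ᵥ z)) +
        ∑ j ∈ Finset.range k, (Bᵀ *ᵥ (Aᵀ ^ j *ᵥ z)) ⬝ᵥ (Bᵀ *ᵥ (Aᵀ ^ j *ᵥ z)) =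
      z ⬝ᵥ (P *ᵥ z) := by
  induction k with
  | zero => simp
  | succ k ih =>
    rw [Finset.sum_range_succ, pow_succ', ← mulVec_mulVec, ← ih,
      ← lyapunov_step h (Aᵀ ^ k *ᵥ z)]
    ring

end Lyapunov

theorem Matrix.tendsto_outputs_of_lyapunov {ι κ : Type*} [Fintype ι] [DecidableEq ι] [Fintype κ]
    {A P : Matrix ι ι ℝ} {B : Matrix ι κ ℝ} (hP : P.PosSemidef)
    (h : A * P * Aᵀ - P + B * Bᵀ = 0) (z : ι → ℝ) :
    Tendsto (fun k : ℕ => Bᵀ *ᵥ (Aᵀ ^ k *ᵥ z)) atTop (𝓝 0) := by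
  refine tendsto_zero_of_tendsto_dotProduct_self (Summable.tendsto_atTop_zero ?_)
  refine summable_of_sum_range_le (c := z ⬝ᵥ (P *ᵥ z))
    (fun k => star_trivial (Bᵀ *ᵥ (Aᵀ ^ k *ᵥ z)) ▸ dotProduct_star_self_nonneg _) fun k => ?_
  have hV := hP.dotProduct_mulVec_nonneg (Aᵀ ^ k *ᵥ z)
  rw [star_trivial] at hV
  linarith [lyapunov_telescope h z k]

/-- If the system `x_{k+1} = A x_k + B u_k` is controllable and there is a symmetric
positive definite solution `P` of `A P Aᵀ − P + B Bᵀ = 0`, then the system is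
asymptotically stable. -/
theorem stmt_5 {n m : ℕ} (A : Matrix (Fin n) (Fin n) ℝ) (B : Matrix (Fin n) (Fin m) ℝ)
    (hctrb : ∀ z : Fin n → ℝ, z ≠ 0 → ∃ k : ℕ, Bᵀ *ᵥ ((Aᵀ ^ k) *ᵥ z) ≠ 0)
    (hP : ∃ P : Matrix (Fin n) (Fin n) ℝ, P.PosDef ∧ A * P * Aᵀ - P + B * Bᵀ = 0) :
    ∀ x₀ : Fin n → ℝ, Tendsto (fun k : ℕ => (A ^ k) *ᵥ x₀) atTop (nhds 0) := by
  obtain ⟨P, hPd, hLyap⟩ := hP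
  refine tendsto_pow_mulVec_of_transpose fun z => ?_
  exact tendsto_pow_mulVec_of_tendsto_outputs hctrb z
    (tendsto_outputs_of_lyapunov hPd.posSemidef hLyap z)
end

section
/- If the discrete-time linear system x_{k+1} = A x_k + B u_k is asymptotically stable and there exists a symmetric positive definite n×n real matrix P satisfying A P Aᵀ − P + B Bᵀ = 0, then the system is controllable: for every nonzero z ∈ ℝⁿ there exists a natural number k with Bᵀ(Aᵀ)ᵏ z ≠ 0. -/
/-!
If `Bᵀ (Aᵀ)ᵏ z = 0` for all `k`, the Lyapunov equation makes the quadratic form `x ↦ xᵀ P x`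
constant along the adjoint orbit `(Aᵀ)ᵏ z`. Stability forces `Aᵏ → 0`, so that orbit tends to `0`,
hence `zᵀ P z = 0` and `z = 0` because `P` is positive definite.
-/

open Filter Matrix Topology

namespace Matrix

variable {ι κ R : Type*}

theorem transpose_mulVec_dotProduct_mulVec_transpose_mulVec [Fintype ι] [Fintype κ]
    [CommSemiring R] (M : Matrix ι κ R) (N : Matrix κ κ R) (v : ι → R) :
    (Mᵀ *ᵥ v) ⬝ᵥ (N *ᵥ (Mᵀ *ᵥ v)) = v ⬝ᵥ ((M * N * Mᵀ) *ᵥ v) := by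
  rw [← mulVec_mulVec, ← mulVec_mulVec, dotProduct_mulVec v M, ← mulVec_transpose]

section Lyapunov

variable [Fintype ι] [Fintype κ] [CommRing R]
  {A P : Matrix ι ι R} {B : Matrix ι κ R}

theorem transpose_mulVec_dotProduct_of_lyapunov (hly : A * P * Aᵀ - P + B * Bᵀ = 0)
    (v : ι → R) :
    (Aᵀ *ᵥ v) ⬝ᵥ (P *ᵥ (Aᵀ *ᵥ v)) = v ⬝ᵥ (P *ᵥ v) - (Bᵀ *ᵥ v) ⬝ᵥ (Bᵀ *ᵥ v) := by
  have hAPA : A * P * Aᵀ = P - B * Bᵀ := by linear_combination (norm := module) hly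
  have hBB : (Bᵀ *ᵥ v) ⬝ᵥ (Bᵀ *ᵥ v) = v ⬝ᵥ ((B * Bᵀ) *ᵥ v) := by
    rw [← mulVec_mulVec, dotProduct_mulVec v B, ← mulVec_transpose]
  rw [transpose_mulVec_dotProduct_mulVec_transpose_mulVec, hAPA, sub_mulVec, dotProduct_sub, hBB]

theorem dotProduct_mulVec_pow_transpose_of_lyapunov [DecidableEq ι]
    (hly : A * P * Aᵀ - P + B * Bᵀ = 0) {z : ι → R}
    (hz : ∀ k : ℕ, Bᵀ *ᵥ ((Aᵀ ^ k) *ᵥ z) = 0) (k : ℕ) :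
    ((Aᵀ ^ k) *ᵥ z) ⬝ᵥ (P *ᵥ ((Aᵀ ^ k) *ᵥ z)) = z ⬝ᵥ (P *ᵥ z) := by
  induction k with
  | zero => simp
  | succ k ih =>
    rw [pow_succ', ← mulVec_mulVec, transpose_mulVec_dotProduct_of_lyapunov hly, hz k,
      dotProduct_zero, sub_zero, ih]

end Lyapunov

theorem tendsto_pow_of_tendsto_pow_mulVec [Fintype ι] [DecidableEq ι] [Semiring R]
    [TopologicalSpace R] {A : Matrix ι ι R}
    (hA : ∀ x : ι → R, Tendsto (fun k : ℕ => (A ^ k) *ᵥ x) atTop (𝓝 0)) :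
    Tendsto (fun k : ℕ => A ^ k) atTop (𝓝 0) := by
  refine tendsto_pi_nhds.2 fun i => tendsto_pi_nhds.2 fun j => ?_
  simpa [mulVec_single_one] using tendsto_pi_nhds.1 (hA (Pi.single j 1)) i

end Matrix

/-- If the system `x_{k+1} = A x_k + B u_k` is asymptotically stable and there is a
symmetric positive definite solution `P` of `A P Aᵀ − P + B Bᵀ = 0`, then the system
is controllable. -/
theorem stmt_6 {n m : ℕ} (A : Matrix (Fin n) (Fin n) ℝ) (B : Matrix (Fin n) (Fin m) ℝ)
    (hstab : ∀ x₀ : Fin n → ℝ,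
      Tendsto (fun k : ℕ => (A ^ k) *ᵥ x₀) atTop (nhds 0))
    (hP : ∃ P : Matrix (Fin n) (Fin n) ℝ, P.PosDef ∧ A * P * Aᵀ - P + B * Bᵀ = 0) :
    ∀ z : Fin n → ℝ, z ≠ 0 → ∃ k : ℕ, Bᵀ *ᵥ ((Aᵀ ^ k) *ᵥ z) ≠ 0 := by
  obtain ⟨P, hPd, hly⟩ := hP
  intro z hz
  by_contra! hB
  have hcont : Continuous fun M : Matrix (Fin n) (Fin n) ℝ => (Mᵀ *ᵥ z) ⬝ᵥ (P *ᵥ (Mᵀ *ᵥ z)) := by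
    fun_prop
  have hlim : Tendsto (fun k : ℕ => ((Aᵀ ^ k) *ᵥ z) ⬝ᵥ (P *ᵥ ((Aᵀ ^ k) *ᵥ z))) atTop (𝓝 0) := by
    simpa [Function.comp_def, transpose_pow] using
      (hcont.tendsto 0).comp (tendsto_pow_of_tendsto_pow_mulVec hstab)
  simp only [dotProduct_mulVec_pow_transpose_of_lyapunov hly hB] at hlim
  have hzero : z ⬝ᵥ (P *ᵥ z) = 0 := tendsto_nhds_unique tendsto_const_nhds hlim
  simpa [hzero] using hPd.dotProduct_mulVec_pos hz
end

section
/- If the discrete-time linear system x_{k+1} = A x_k, y_k = C x_k is detectable (i.e., for every nonzero x₀ ∈ ℝⁿ with the property that C Aᵏ x₀ = 0 for all natural numbers k, one has Aᵏx₀ → 0 as k → ∞) and there exists a symmetric positive semidefinite n×n real matrix Q satisfying AᵀQA − Q + CᵀC = 0, then the system is asymptotically stable: for every x₀ ∈ ℝⁿ, Aᵏx₀ → 0 as k → ∞. -/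
open Filter Matrix Complex
open scoped Topology ComplexOrder

/-!
An eigenvalue `μ` of `A` with `|μ| ≥ 1` and eigenvector `v` is impossible: evaluating the Lyapunov
equation at `v` gives `(|μ|² - 1) v*Qv + |Cv|² = 0`, so `Cv = 0`, hence `C Aᵏ v = μᵏ Cv = 0` for
all `k`. Detectability, applied to the real and imaginary parts of `v`, then forces
`μᵏ v = Aᵏ v → 0`, contradicting `|μ| ≥ 1`. So the spectral radius of `A` is `< 1`, and Gelfand's
formula gives `Aᵏ → 0`.
-/

theorem spectrum.tendsto_pow_atTop_nhds_zero_of_spectralRadius_lt_one {A : Type*} [NormedRing A]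
    [NormedAlgebra ℂ A] [CompleteSpace A] {a : A} (h : spectralRadius ℂ a < 1) :
    Tendsto (fun k : ℕ => a ^ k) atTop (𝓝 0) := by
  obtain ⟨c, hρc, hc1⟩ := ENNReal.lt_iff_exists_nnreal_btwn.mp h
  have hbound : ∀ᶠ k : ℕ in atTop, ‖a ^ k‖ ≤ (c : ℝ) ^ k := by
    filter_upwards [(pow_norm_pow_one_div_tendsto_nhds_spectralRadius a).eventually_lt_const hρc,
      eventually_gt_atTop 0] with k hk hk0
    rw [one_div, ENNReal.ofReal_lt_coe_iff (by positivity),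
      Real.rpow_inv_lt_iff_of_pos (norm_nonneg _) c.coe_nonneg (by positivity),
      Real.rpow_natCast] at hk
    exact hk.le
  refine squeeze_zero_norm' hbound (tendsto_pow_atTop_nhds_zero_of_lt_one c.coe_nonneg ?_)
  exact_mod_cast hc1

namespace Matrix

section

-- Any submultiplicative norm makes `Matrix n n ℂ` a Banach algebra, which is all Gelfand needs.
attribute [local instance] Matrix.linftyOpNormedRing Matrix.linftyOpNormedAlgebra

theorem tendsto_pow_atTop_nhds_zero_of_forall_norm_lt_one {n : Type*} [Fintype n]
    [DecidableEq n] {B : Matrix n n ℂ} (h : ∀ μ ∈ spectrum ℂ B, ‖μ‖ < 1) :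
    Tendsto (fun k : ℕ => B ^ k) atTop (𝓝 0) := by
  have : CompleteSpace (Matrix n n ℂ) := inferInstanceAs (CompleteSpace (n → n → ℂ))
  rcases subsingleton_or_nontrivial (Matrix n n ℂ) with _ | _
  · simpa only [Subsingleton.elim _ (0 : Matrix n n ℂ)] using tendsto_const_nhds
  refine spectrum.tendsto_pow_atTop_nhds_zero_of_spectralRadius_lt_one ?_
  exact_mod_cast spectrum.spectralRadius_lt_of_forall_lt B (r := 1) fun μ hμ => by
    exact_mod_cast h μ hμ

end

variable {m n : Type*}

theorem pow_mulVec_of_mulVec_eq_smul {R : Type*} [CommSemiring R] [Fintype n] [DecidableEq n]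
    {A : Matrix n n R} {μ : R} {v : n → R} (hv : A *ᵥ v = μ • v) (k : ℕ) :
    A ^ k *ᵥ v = μ ^ k • v := by
  induction k with
  | zero => simp
  | succ k ih => rw [pow_succ', ← mulVec_mulVec, ih, mulVec_smul, hv, smul_smul, ← pow_succ]

theorem norm_lt_one_of_tendsto_pow_mulVec {𝕜 : Type*} [NormedField 𝕜] [Fintype n] [DecidableEq n]
    {A : Matrix n n 𝕜} {μ : 𝕜} {v : n → 𝕜} (hv : A *ᵥ v = μ • v) (hv0 : v ≠ 0)
    (h : Tendsto (fun k => A ^ k *ᵥ v) atTop (𝓝 0)) : ‖μ‖ < 1 := by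
  obtain ⟨i, hi⟩ := Function.ne_iff.mp hv0
  have hμv : Tendsto (fun k => μ ^ k * v i) atTop (𝓝 0) := by
    simpa [pow_mulVec_of_mulVec_eq_smul hv] using tendsto_pi_nhds.mp h i
  rw [← tendsto_pow_atTop_nhds_zero_iff_norm_lt_one]
  simpa [mul_assoc, mul_inv_cancel₀ hi] using hμv.mul_const (v i)⁻¹

theorem mulVec_eq_zero_of_lyapunov_of_one_le_norm {𝕜 : Type*} [RCLike 𝕜] [Fintype m] [Fintype n]
    {A Q : Matrix n n 𝕜} {C : Matrix m n 𝕜} (hQ : Q.PosSemidef)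
    (hL : Aᴴ * Q * A - Q + Cᴴ * C = 0) {μ : 𝕜} {v : n → 𝕜} (hv : A *ᵥ v = μ • v)
    (hμ : 1 ≤ ‖μ‖) : C *ᵥ v = 0 := by
  have hAQA : star v ⬝ᵥ ((Aᴴ * Q * A) *ᵥ v) = (‖μ‖ : 𝕜) ^ 2 * (star v ⬝ᵥ (Q *ᵥ v)) := by
    rw [← mulVec_mulVec, ← mulVec_mulVec, dotProduct_mulVec, ← star_mulVec, hv]
    simp [star_smul, mulVec_smul, smul_dotProduct, dotProduct_smul, ← mul_assoc, RCLike.mul_conj]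
  have hCC : star v ⬝ᵥ ((Cᴴ * C) *ᵥ v) = star (C *ᵥ v) ⬝ᵥ (C *ᵥ v) := by
    rw [← mulVec_mulVec, dotProduct_mulVec, ← star_mulVec]
  have key : ((‖μ‖ ^ 2 - 1 : ℝ) : 𝕜) * (star v ⬝ᵥ (Q *ᵥ v)) + star (C *ᵥ v) ⬝ᵥ (C *ᵥ v) = 0 := by
    have h := congrArg (fun M => star v ⬝ᵥ (M *ᵥ v)) hL
    simp only [add_mulVec, sub_mulVec, dotProduct_add, dotProduct_sub, hAQA, hCC, zero_mulVec,
      dotProduct_zero] at h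
    push_cast
    linear_combination h
  have hq : 0 ≤ ((‖μ‖ ^ 2 - 1 : ℝ) : 𝕜) * (star v ⬝ᵥ (Q *ᵥ v)) :=
    mul_nonneg (RCLike.ofReal_nonneg.mpr (by nlinarith)) (hQ.dotProduct_mulVec_nonneg v)
  exact dotProduct_star_self_eq_zero.mp
    ((add_eq_zero_iff_of_nonneg hq (dotProduct_star_self_nonneg _)).mp key).2

theorem transpose_map_ofReal (M : Matrix m n ℝ) : Mᵀ.map ofReal = (M.map ofReal)ᴴ := by
  ext; simp

variable [Fintype n]

theorem map_ofReal_mul {l : Type*} (M : Matrix l n ℝ) (N : Matrix n m ℝ) :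
    (M * N).map ofReal = M.map ofReal * N.map ofReal :=
  Matrix.map_mul (f := ofRealHom)

theorem map_ofReal_pow [DecidableEq n] (A : Matrix n n ℝ) (k : ℕ) :
    A.map ofReal ^ k = (A ^ k).map ofReal :=
  (map_pow ofRealHom.mapMatrix A k).symm

theorem map_ofReal_mulVec (M : Matrix m n ℝ) (w : n → ℂ) :
    M.map ofReal *ᵥ w =
      fun i => ((M *ᵥ fun j => (w j).re) i : ℂ) + ((M *ᵥ fun j => (w j).im) i) * I := by
  ext i
  apply Complex.ext <;> simp [mulVec, dotProduct, re_sum, im_sum]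

theorem PosSemidef.map_ofReal {Q : Matrix n n ℝ} (hQ : Q.PosSemidef) :
    (Q.map ofReal).PosSemidef := by
  obtain ⟨k, u, rfl⟩ := posSemidef_iff_eq_sum_vecMulVec.mp hQ
  refine posSemidef_iff_eq_sum_vecMulVec.mpr ⟨k, fun i j => u i j, ?_⟩
  ext a b
  simp [vecMulVec, sum_apply]

theorem tendsto_map_ofReal_pow_mulVec [DecidableEq n] [Fintype m] {A : Matrix n n ℝ}
    {C : Matrix m n ℝ}
    (hdet : ∀ x : n → ℝ, (∀ k : ℕ, C *ᵥ (A ^ k *ᵥ x) = 0) →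
      Tendsto (fun k : ℕ => A ^ k *ᵥ x) atTop (𝓝 0))
    {v : n → ℂ} (hv : ∀ k : ℕ, C.map ofReal *ᵥ (A.map ofReal ^ k *ᵥ v) = 0) :
    Tendsto (fun k : ℕ => A.map ofReal ^ k *ᵥ v) atTop (𝓝 0) := by
  set x : n → ℝ := fun j => (v j).re
  set y : n → ℝ := fun j => (v j).im
  have hout : ∀ k, C *ᵥ (A ^ k *ᵥ x) = 0 ∧ C *ᵥ (A ^ k *ᵥ y) = 0 := fun k => by
    have h := hv k
    rw [map_ofReal_pow, mulVec_mulVec, ← map_ofReal_mul, map_ofReal_mulVec, ← mulVec_mulVec,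
      ← mulVec_mulVec] at h
    constructor <;> ext i
    · simpa using congrArg (fun w => (w i).re) h
    · simpa using congrArg (fun w => (w i).im) h
  have hx := tendsto_pi_nhds.mp (hdet x fun k => (hout k).1)
  have hy := tendsto_pi_nhds.mp (hdet y fun k => (hout k).2)
  simp_rw [map_ofReal_pow, map_ofReal_mulVec, tendsto_pi_nhds]
  intro i
  simpa using ((continuous_ofReal.tendsto 0).comp (hx i)).add
    (((continuous_ofReal.tendsto 0).comp (hy i)).mul_const I)

theorem norm_lt_one_of_mem_spectrum_map_ofReal [DecidableEq n] [Fintype m] {A Q : Matrix n n ℝ}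
    {C : Matrix m n ℝ}
    (hdet : ∀ x : n → ℝ, (∀ k : ℕ, C *ᵥ (A ^ k *ᵥ x) = 0) →
      Tendsto (fun k : ℕ => A ^ k *ᵥ x) atTop (𝓝 0))
    (hQ : Q.PosSemidef) (hL : Aᵀ * Q * A - Q + Cᵀ * C = 0) {μ : ℂ}
    (hμ : μ ∈ spectrum ℂ (A.map ofReal)) : ‖μ‖ < 1 := by
  rw [← AlgEquiv.spectrum_eq toLinAlgEquiv', ← Module.End.hasEigenvalue_iff_mem_spectrum] at hμ
  obtain ⟨v, hv⟩ := hμ.exists_hasEigenvector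
  have hAv : A.map ofReal *ᵥ v = μ • v := by simpa using hv.apply_eq_smul
  by_contra! hμ1
  have hL' : (A.map ofReal)ᴴ * Q.map ofReal * A.map ofReal - Q.map ofReal +
      (C.map ofReal)ᴴ * C.map ofReal = 0 := by
    simpa [← transpose_map_ofReal, ← map_ofReal_mul, Matrix.map_sub, Matrix.map_add] using
      congrArg (map · ofReal) hL
  have hCv := mulVec_eq_zero_of_lyapunov_of_one_le_norm hQ.map_ofReal hL' hAv hμ1
  have hout : ∀ k : ℕ, C.map ofReal *ᵥ (A.map ofReal ^ k *ᵥ v) = 0 := fun k => by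
    rw [pow_mulVec_of_mulVec_eq_smul hAv, mulVec_smul, hCv, smul_zero]
  exact hμ1.not_gt
    (norm_lt_one_of_tendsto_pow_mulVec hAv hv.2 (tendsto_map_ofReal_pow_mulVec hdet hout))

end Matrix

/-- If the system `x_{k+1} = A x_k`, `y_k = C x_k` is detectable and there is a
symmetric positive semidefinite solution `Q` of `AᵀQA − Q + CᵀC = 0`, then the system
is asymptotically stable. -/
theorem stmt_7 {n p : ℕ} (A : Matrix (Fin n) (Fin n) ℝ) (C : Matrix (Fin p) (Fin n) ℝ)
    (hdet : ∀ x₀ : Fin n → ℝ, x₀ ≠ 0 → (∀ k : ℕ, C *ᵥ ((A ^ k) *ᵥ x₀) = 0) →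
      Tendsto (fun k : ℕ => (A ^ k) *ᵥ x₀) atTop (nhds 0))
    (hQ : ∃ Q : Matrix (Fin n) (Fin n) ℝ, Q.PosSemidef ∧ Aᵀ * Q * A - Q + Cᵀ * C = 0) :
    ∀ x₀ : Fin n → ℝ, Tendsto (fun k : ℕ => (A ^ k) *ᵥ x₀) atTop (nhds 0) := by
  obtain ⟨Q, hQ, hL⟩ := hQ
  have hdet' : ∀ x₀ : Fin n → ℝ, (∀ k : ℕ, C *ᵥ (A ^ k *ᵥ x₀) = 0) →
      Tendsto (fun k : ℕ => A ^ k *ᵥ x₀) atTop (𝓝 0) := fun x₀ hout => by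
    rcases eq_or_ne x₀ 0 with rfl | hne
    · simp
    · exact hdet x₀ hne hout
  have hpow : Tendsto (fun k : ℕ => A.map ofReal ^ k) atTop (𝓝 0) :=
    tendsto_pow_atTop_nhds_zero_of_forall_norm_lt_one fun μ hμ =>
      norm_lt_one_of_mem_spectrum_map_ofReal hdet' hQ hL hμ
  have hre : Tendsto (fun k : ℕ => A ^ k) atTop (𝓝 0) := by
    simpa [map_ofReal_pow, Function.comp_def] using
      ((continuous_id.matrix_map continuous_re).tendsto 0).comp hpow
  intro x₀
  have hmul : Continuous fun M : Matrix (Fin n) (Fin n) ℝ => M *ᵥ x₀ :=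
    continuous_id.matrix_mulVec continuous_const
  simpa [Function.comp_def] using (hmul.tendsto 0).comp hre
end

section
/- Let A be an n×n real matrix and C a p×n real matrix with C ≠ 0, and let α > 0. Then the map f(X) = (AᵀXA + α CᵀC) / tr(AᵀXA + α CᵀC), defined on the set 𝒞 = {X : X symmetric positive semidefinite, tr X = 1}, maps 𝒞 into 𝒞 and has a fixed point: there exists X ∈ 𝒞 with tr(AᵀXA + α CᵀC) · X = AᵀXA + α CᵀC. -/
/-!
The map `T X = Aᵀ X A + α tr(X) CᵀC` is linear, preserves positive semidefiniteness and agrees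
with the numerator of `f` on `𝒞`, so a fixed point of `f` is a trace-one positive semidefinite
eigenvector of `T`. Such an eigenvector exists for every linear map `T` preserving the positive
semidefinite cone (finite-dimensional Krein–Rutman). Since `1` is an order unit, the traces
`t k = tr (T ^ k 1)` are submultiplicative; let `ρ = inf t k ^ (1 / k)`, so that `ρ ^ k ≤ t k`
and `t k` grows no faster than `μ ^ k` for any `μ > ρ`. For `μ > ρ` the resolvent series
`R = ∑ μ⁻ᵏ⁻¹ T ^ k 1` converges to a positive semidefinite matrix with `T R = μ R - 1` and
`tr R ≥ ∑ ρ ^ k / μ ^ (k + 1) = 1 / (μ - ρ)`. Normalising `R` gives approximate eigenvectors for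
`ρ` with error `O(μ - ρ)`, and compactness of `𝒞` turns them into an exact one.
-/

open Matrix Filter
open scoped Matrix.Norms.Elementwise

namespace Matrix

variable {ι : Type*} [Fintype ι]

lemma PosSemidef.abs_apply_le_trace {P : Matrix ι ι ℝ} (hP : P.PosSemidef) (i j : ι) :
    |P i j| ≤ P.trace := by
  classical
  have hdiag : ∀ k, P k k ≤ P.trace := fun k =>
    Finset.single_le_sum (f := P.diag) (fun l _ => hP.diag_nonneg) (Finset.mem_univ k)
  have hsymm : P j i = P i j := by simpa using congrFun (congrFun hP.1 i) j
  have hquad : ∀ s : ℝ, 0 ≤ P i i + 2 * s * P i j + s ^ 2 * P j j := fun s => by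
    have := hP.dotProduct_mulVec_nonneg (Pi.single i 1 + s • Pi.single j 1)
    simp [mulVec_add, mulVec_smul, mulVec_single, dotProduct_add, add_dotProduct,
      single_dotProduct, hsymm] at this
    linarith
  rw [abs_le]
  constructor <;> nlinarith [hquad 1, hquad (-1), hdiag i, hdiag j]

lemma PosSemidef.norm_le_trace {P : Matrix ι ι ℝ} (hP : P.PosSemidef) : ‖P‖ ≤ P.trace :=
  (norm_le_iff hP.trace_nonneg).mpr fun i j => hP.abs_apply_le_trace i j

open scoped MatrixOrder in
lemma PosSemidef.posSemidef_trace_smul_one_sub [DecidableEq ι] {P : Matrix ι ι ℝ}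
    (hP : P.PosSemidef) : (P.trace • (1 : Matrix ι ι ℝ) - P).PosSemidef := by
  have : P ≤ algebraMap ℝ (Matrix ι ι ℝ) P.trace := by
    refine le_algebraMap_of_spectrum_le (fun x hx => ?_) hP.1
    obtain ⟨i, rfl⟩ := hP.1.spectrum_real_eq_range_eigenvalues ▸ hx
    rw [hP.1.trace_eq_sum_eigenvalues]
    exact Finset.single_le_sum (fun j _ => hP.eigenvalues_nonneg j) (Finset.mem_univ i)
  simpa [le_iff, Algebra.algebraMap_eq_smul_one] using this

lemma isClosed_setOf_posSemidef : IsClosed {P : Matrix ι ι ℝ | P.PosSemidef} := by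
  have : {P : Matrix ι ι ℝ | P.PosSemidef} =
      {P | Pᴴ = P} ∩ ⋂ x : ι → ℝ, {P | 0 ≤ star x ⬝ᵥ P *ᵥ x} := by
    ext P
    simp [posSemidef_iff_dotProduct_mulVec, IsHermitian]
  rw [this]
  exact (isClosed_eq (by fun_prop) continuous_id).inter
    (isClosed_iInter fun x => isClosed_le continuous_const (by fun_prop))

lemma isCompact_setOf_posSemidef_trace_eq_one :
    IsCompact {P : Matrix ι ι ℝ | P.PosSemidef ∧ P.trace = 1} := by
  refine Metric.isCompact_of_isClosed_isBounded
    (isClosed_setOf_posSemidef.inter (isClosed_eq (by fun_prop) continuous_const))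
    ((Metric.isBounded_closedBall (x := 0) (r := 1)).subset fun P hP => ?_)
  simpa [hP.2] using hP.1.norm_le_trace

end Matrix

section GrowthRate

-- The index is shifted because `t 0 ^ (0 : ℝ)⁻¹ = t 0 ^ 0 = 1` would be a junk term.
noncomputable def growthRate (t : ℕ → ℝ) : ℝ :=
  ⨅ k : ℕ, t (k + 1) ^ ((k + 1 : ℕ) : ℝ)⁻¹

variable {t : ℕ → ℝ}

lemma growthRate_nonneg (ht : ∀ k, 0 ≤ t k) : 0 ≤ growthRate t :=
  le_ciInf fun _ => Real.rpow_nonneg (ht _) _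

lemma growthRate_pow_le (ht : ∀ k, 0 ≤ t k) (h0 : 1 ≤ t 0) : ∀ k, growthRate t ^ k ≤ t k
  | 0 => by simpa using h0
  | k + 1 => by
    have hle : growthRate t ≤ t (k + 1) ^ ((k + 1 : ℕ) : ℝ)⁻¹ :=
      ciInf_le ⟨0, by rintro _ ⟨j, rfl⟩; exact Real.rpow_nonneg (ht _) _⟩ k
    calc growthRate t ^ (k + 1) ≤ (t (k + 1) ^ ((k + 1 : ℕ) : ℝ)⁻¹) ^ (k + 1) :=
          pow_le_pow_left₀ (growthRate_nonneg ht) hle _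
      _ = t (k + 1) := Real.rpow_inv_natCast_pow (ht _) k.succ_ne_zero

lemma exists_le_mul_pow_of_le_pow (ht : ∀ k, 0 ≤ t k) (hsub : ∀ a b, t (a + b) ≤ t a * t b)
    {μ : ℝ} (hμ : 0 < μ) {K : ℕ} (hK : 0 < K) (htK : t K ≤ μ ^ K) :
    ∃ B, ∀ k, t k ≤ B * μ ^ k := by
  refine ⟨∑ r ∈ Finset.range K, t r / μ ^ r, fun k => ?_⟩
  induction k using Nat.strong_induction_on with
  | _ k ih =>
    rcases lt_or_ge k K with hk | hk
    · rw [← div_le_iff₀ (pow_pos hμ k)]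
      exact Finset.single_le_sum (f := fun r => t r / μ ^ r)
        (fun r _ => div_nonneg (ht r) (pow_nonneg hμ.le r)) (Finset.mem_range.mpr hk)
    · obtain ⟨j, rfl⟩ := Nat.exists_eq_add_of_le hk
      calc t (K + j) ≤ t K * t j := hsub K j
        _ ≤ μ ^ K * ((∑ r ∈ Finset.range K, t r / μ ^ r) * μ ^ j) :=
          mul_le_mul htK (ih j (by omega)) (ht j) (pow_nonneg hμ.le K)
        _ = (∑ r ∈ Finset.range K, t r / μ ^ r) * μ ^ (K + j) := by ring

lemma exists_le_mul_pow_of_growthRate_lt (ht : ∀ k, 0 ≤ t k)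
    (hsub : ∀ a b, t (a + b) ≤ t a * t b) {μ : ℝ} (hμ : growthRate t < μ) :
    ∃ B, ∀ k, t k ≤ B * μ ^ k := by
  obtain ⟨k, hk⟩ := exists_lt_of_ciInf_lt hμ
  refine exists_le_mul_pow_of_le_pow ht hsub ((growthRate_nonneg ht).trans_lt hμ)
    k.succ_pos ?_
  calc t (k + 1) = (t (k + 1) ^ ((k + 1 : ℕ) : ℝ)⁻¹) ^ (k + 1) :=
        (Real.rpow_inv_natCast_pow (ht _) k.succ_ne_zero).symm
    _ ≤ μ ^ (k + 1) := pow_le_pow_left₀ (Real.rpow_nonneg (ht _) _) hk.le _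

lemma summable_div_pow_of_growthRate_lt (ht : ∀ k, 0 ≤ t k)
    (hsub : ∀ a b, t (a + b) ≤ t a * t b) {μ : ℝ} (hμ : growthRate t < μ) :
    Summable fun k => t k / μ ^ (k + 1) := by
  set ρ := growthRate t
  have hρ : 0 ≤ ρ := growthRate_nonneg ht
  have hμ0 : 0 < μ := hρ.trans_lt hμ
  obtain ⟨B, hB⟩ := exists_le_mul_pow_of_growthRate_lt ht hsub (left_lt_add_div_two.mpr hμ)
  have hq : (ρ + μ) / 2 / μ < 1 := (div_lt_one hμ0).mpr (add_div_two_lt_right.mpr hμ)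
  refine Summable.of_nonneg_of_le (fun k => div_nonneg (ht k) (pow_pos hμ0 _).le) (fun k => ?_)
    ((summable_geometric_of_lt_one (by positivity) hq).mul_left (B / μ))
  rw [div_le_iff₀ (pow_pos hμ0 _)]
  calc t k ≤ B * ((ρ + μ) / 2) ^ k := hB k
    _ = B / μ * ((ρ + μ) / 2 / μ) ^ k * μ ^ (k + 1) := by
      rw [div_pow _ μ, pow_succ]
      field_simp

lemma inv_sub_growthRate_le_tsum (ht : ∀ k, 0 ≤ t k) (h0 : 1 ≤ t 0)
    (hsub : ∀ a b, t (a + b) ≤ t a * t b) {μ : ℝ} (hμ : growthRate t < μ) :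
    (μ - growthRate t)⁻¹ ≤ ∑' k, t k / μ ^ (k + 1) := by
  set ρ := growthRate t
  have hρ : 0 ≤ ρ := growthRate_nonneg ht
  have hμ0 : 0 < μ := hρ.trans_lt hμ
  have hq : ρ / μ < 1 := (div_lt_one hμ0).mpr hμ
  have hgeom : HasSum (fun k => ρ ^ k / μ ^ (k + 1)) (μ - ρ)⁻¹ := by
    have hterm : (fun k => ρ ^ k / μ ^ (k + 1)) = fun k => μ⁻¹ * (ρ / μ) ^ k := by
      ext k
      rw [div_pow, pow_succ]
      field_simp
    have hsum : (μ - ρ)⁻¹ = μ⁻¹ * (1 - ρ / μ)⁻¹ := by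
      field_simp
    rw [hterm, hsum]
    exact (hasSum_geometric_of_lt_one (by positivity) hq).mul_left μ⁻¹
  rw [← hgeom.tsum_eq]
  exact hgeom.summable.tsum_le_tsum
    (fun k => div_le_div_of_nonneg_right (growthRate_pow_le ht h0 k) (pow_pos hμ0 _).le)
    (summable_div_pow_of_growthRate_lt ht hsub hμ)

end GrowthRate

namespace Matrix

section PositiveMap

variable {ι : Type*} {T : Matrix ι ι ℝ →ₗ[ℝ] Matrix ι ι ℝ}

lemma posSemidef_pow_apply (hT : ∀ X, PosSemidef X → (T X).PosSemidef) {X : Matrix ι ι ℝ}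
    (hX : X.PosSemidef) : ∀ k, ((T ^ k) X).PosSemidef
  | 0 => hX
  | k + 1 => by
    rw [pow_succ', Module.End.mul_apply]
    exact hT _ (posSemidef_pow_apply hT hX k)

variable [Fintype ι] [DecidableEq ι]

noncomputable def iterateTrace (T : Matrix ι ι ℝ →ₗ[ℝ] Matrix ι ι ℝ) (k : ℕ) : ℝ :=
  ((T ^ k) 1).trace

lemma iterateTrace_nonneg (hT : ∀ X, PosSemidef X → (T X).PosSemidef) (k : ℕ) :
    0 ≤ iterateTrace T k :=
  (posSemidef_pow_apply hT PosSemidef.one k).trace_nonneg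

lemma one_le_iterateTrace_zero [Nonempty ι] : 1 ≤ iterateTrace T 0 := by
  simp [iterateTrace, Nat.one_le_iff_ne_zero, Fintype.card_ne_zero]

/-- The order-unit bound `T ^ b 1 ≤ tr (T ^ b 1) • 1`, pushed through the positive map `T ^ a`. -/
lemma iterateTrace_add_le (hT : ∀ X, PosSemidef X → (T X).PosSemidef) (a b : ℕ) :
    iterateTrace T (a + b) ≤ iterateTrace T a * iterateTrace T b := by
  have h := (posSemidef_pow_apply hT
    (posSemidef_pow_apply hT PosSemidef.one b).posSemidef_trace_smul_one_sub a).trace_nonneg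
  rw [map_sub, map_smul, ← Module.End.mul_apply, ← pow_add, trace_sub, trace_smul,
    smul_eq_mul] at h
  simp only [iterateTrace]
  linarith

/-- The Neumann series of `(μ - T)⁻¹ 1`. -/
noncomputable def resolventOne (T : Matrix ι ι ℝ →ₗ[ℝ] Matrix ι ι ℝ) (μ : ℝ) : Matrix ι ι ℝ :=
  ∑' k : ℕ, (μ ^ (k + 1))⁻¹ • (T ^ k) 1

lemma hasSum_resolventOne (hT : ∀ X, PosSemidef X → (T X).PosSemidef) {μ : ℝ}
    (hμ : growthRate (iterateTrace T) < μ) :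
    HasSum (fun k : ℕ => (μ ^ (k + 1))⁻¹ • (T ^ k) 1) (resolventOne T μ) := by
  have hμ0 : 0 < μ := (growthRate_nonneg (iterateTrace_nonneg hT)).trans_lt hμ
  refine (Summable.of_norm_bounded (summable_div_pow_of_growthRate_lt (iterateTrace_nonneg hT)
    (iterateTrace_add_le hT) hμ) fun k => ?_).hasSum
  rw [norm_smul, Real.norm_of_nonneg (by positivity), inv_mul_eq_div]
  exact div_le_div_of_nonneg_right (posSemidef_pow_apply hT PosSemidef.one k).norm_le_trace
    (by positivity)

lemma posSemidef_resolventOne (hT : ∀ X, PosSemidef X → (T X).PosSemidef) {μ : ℝ}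
    (hμ : growthRate (iterateTrace T) < μ) : (resolventOne T μ).PosSemidef := by
  have hμ0 : 0 < μ := (growthRate_nonneg (iterateTrace_nonneg hT)).trans_lt hμ
  refine isClosed_setOf_posSemidef.mem_of_tendsto (hasSum_resolventOne hT hμ)
    (Eventually.of_forall fun s => posSemidef_sum s fun k _ => ?_)
  exact (posSemidef_pow_apply hT PosSemidef.one k).smul (by positivity)

lemma trace_resolventOne (hT : ∀ X, PosSemidef X → (T X).PosSemidef) {μ : ℝ}
    (hμ : growthRate (iterateTrace T) < μ) :
    (resolventOne T μ).trace = ∑' k, iterateTrace T k / μ ^ (k + 1) := by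
  refine (((hasSum_resolventOne hT hμ).map (traceAddMonoidHom ι ℝ)
    (continuous_id.matrix_trace)).tsum_eq.symm.trans (tsum_congr fun k => ?_))
  simp [iterateTrace, trace_smul, div_eq_inv_mul]

lemma apply_resolventOne (hT : ∀ X, PosSemidef X → (T X).PosSemidef) {μ : ℝ}
    (hμ : growthRate (iterateTrace T) < μ) :
    T (resolventOne T μ) = μ • resolventOne T μ - 1 := by
  have hμ0 : μ ≠ 0 := ((growthRate_nonneg (iterateTrace_nonneg hT)).trans_lt hμ).ne'
  have hsum := hasSum_resolventOne hT hμ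
  set g : ℕ → Matrix ι ι ℝ := fun k => (μ ^ k)⁻¹ • (T ^ k) 1
  have hg : HasSum g (μ • resolventOne T μ) := by
    convert hsum.const_smul μ using 1
    ext1 k
    rw [smul_smul, pow_succ, mul_inv, mul_left_comm, mul_inv_cancel₀ hμ0, mul_one]
  have hshift : HasSum (fun k => g (k + 1)) (T (resolventOne T μ)) := by
    convert hsum.map T T.continuous_of_finiteDimensional using 1
    ext1 k
    simp [g, pow_succ']
  simpa [g] using hshift.unique ((hasSum_nat_add_iff' 1).mpr hg)

lemma exists_approx_eigenvector [Nonempty ι] (hT : ∀ X, PosSemidef X → (T X).PosSemidef)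
    {μ : ℝ} (hμ : growthRate (iterateTrace T) < μ) :
    ∃ Y : Matrix ι ι ℝ, Y.PosSemidef ∧ Y.trace = 1 ∧
      ‖T Y - growthRate (iterateTrace T) • Y‖ ≤
        (μ - growthRate (iterateTrace T)) * (‖(1 : Matrix ι ι ℝ)‖ + 1) := by
  set ρ := growthRate (iterateTrace T)
  set R := resolventOne T μ
  have hτ : (μ - ρ)⁻¹ ≤ R.trace := trace_resolventOne hT hμ ▸
    inv_sub_growthRate_le_tsum (iterateTrace_nonneg hT) one_le_iterateTrace_zero
      (iterateTrace_add_le hT) hμ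
  have hμρ : 0 < μ - ρ := sub_pos.mpr hμ
  have hτ0 : 0 < R.trace := (inv_pos.mpr hμρ).trans_le hτ
  have hY : (R.trace⁻¹ • R).PosSemidef := (posSemidef_resolventOne hT hμ).smul (by positivity)
  have hYtr : (R.trace⁻¹ • R).trace = 1 := by
    rw [trace_smul, smul_eq_mul, inv_mul_cancel₀ hτ0.ne']
  refine ⟨R.trace⁻¹ • R, hY, hYtr, ?_⟩
  have hres : T (R.trace⁻¹ • R) - ρ • R.trace⁻¹ • R =
      (μ - ρ) • R.trace⁻¹ • R - R.trace⁻¹ • (1 : Matrix ι ι ℝ) := by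
    rw [map_smul, apply_resolventOne hT hμ]
    module
  rw [hres]
  calc _ ≤ ‖(μ - ρ) • R.trace⁻¹ • R‖ + ‖R.trace⁻¹ • (1 : Matrix ι ι ℝ)‖ := norm_sub_le _ _
    _ ≤ (μ - ρ) * 1 + (μ - ρ) * ‖(1 : Matrix ι ι ℝ)‖ := by
      rw [norm_smul, norm_smul R.trace⁻¹ (1 : Matrix ι ι ℝ), Real.norm_of_nonneg hμρ.le,
        Real.norm_of_nonneg (inv_nonneg.mpr hτ0.le)]
      gcongr
      · exact hYtr ▸ hY.norm_le_trace
      · exact inv_le_of_inv_le₀ hμρ hτ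
    _ = (μ - ρ) * (‖(1 : Matrix ι ι ℝ)‖ + 1) := by ring

theorem exists_posSemidef_trace_eq_one_eigenvector [Nonempty ι]
    (hT : ∀ X, PosSemidef X → (T X).PosSemidef) :
    ∃ Y : Matrix ι ι ℝ, Y.PosSemidef ∧ Y.trace = 1 ∧ T Y = growthRate (iterateTrace T) • Y := by
  set ρ := growthRate (iterateTrace T)
  set c := ‖(1 : Matrix ι ι ℝ)‖ + 1
  have hc : 0 < c := by positivity
  have happrox : ∀ ε > 0, ∃ Y ∈ {Y : Matrix ι ι ℝ | Y.PosSemidef ∧ Y.trace = 1},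
      ‖T Y - ρ • Y‖ ≤ ε := fun ε hε => by
    obtain ⟨Y, hY, hYtr, hle⟩ := exists_approx_eigenvector hT (μ := ρ + ε / c)
      (lt_add_of_pos_right ρ (by positivity))
    exact ⟨Y, ⟨hY, hYtr⟩, hle.trans_eq (by field_simp; ring)⟩
  obtain ⟨Y, hYK, hmin⟩ := isCompact_setOf_posSemidef_trace_eq_one.exists_isMinOn
    (let ⟨Y, hY, _⟩ := happrox 1 one_pos; ⟨Y, hY⟩)
    (f := fun Y => ‖T Y - ρ • Y‖) (by fun_prop)
  refine ⟨Y, hYK.1, hYK.2, sub_eq_zero.mp (norm_le_zero_iff.mp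
    (le_of_forall_pos_le_add fun ε hε => ?_))⟩
  obtain ⟨Z, hZK, hZ⟩ := happrox ε hε
  simpa using (isMinOn_iff.mp hmin Z hZK).trans hZ

end PositiveMap

section Conjugation

variable {ι : Type*} [Fintype ι]

noncomputable def conjAddTraceSMul (A M : Matrix ι ι ℝ) : Matrix ι ι ℝ →ₗ[ℝ] Matrix ι ι ℝ :=
  LinearMap.mulLeft ℝ Aᵀ ∘ₗ LinearMap.mulRight ℝ A + (traceLinearMap ι ℝ ℝ).smulRight M

@[simp]
lemma conjAddTraceSMul_apply (A M X : Matrix ι ι ℝ) :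
    conjAddTraceSMul A M X = Aᵀ * X * A + X.trace • M := by
  simp [conjAddTraceSMul, mul_assoc]

lemma posSemidef_conjAddTraceSMul (A : Matrix ι ι ℝ) {M : Matrix ι ι ℝ} (hM : M.PosSemidef)
    {X : Matrix ι ι ℝ} (hX : X.PosSemidef) : (conjAddTraceSMul A M X).PosSemidef := by
  simpa using (hX.conjTranspose_mul_mul_same A).add (hM.smul hX.trace_nonneg)

end Conjugation

end Matrix

/-- For `C ≠ 0` and `α > 0`, the map
`f(X) = (AᵀXA + α CᵀC) / tr(AᵀXA + α CᵀC)` maps the set `𝒞` of symmetric positive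
semidefinite matrices of unit trace into itself, and has a fixed point in `𝒞`. -/
theorem stmt_9 {n p : ℕ} (A : Matrix (Fin n) (Fin n) ℝ) (C : Matrix (Fin p) (Fin n) ℝ)
    (hC : C ≠ 0) (α : ℝ) (hα : 0 < α) :
    (∀ X : Matrix (Fin n) (Fin n) ℝ, X.PosSemidef → X.trace = 1 →
      ((Aᵀ * X * A + α • (Cᵀ * C)).trace⁻¹ • (Aᵀ * X * A + α • (Cᵀ * C))).PosSemidef ∧
      ((Aᵀ * X * A + α • (Cᵀ * C)).trace⁻¹ • (Aᵀ * X * A + α • (Cᵀ * C))).trace = 1) ∧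
    ∃ X : Matrix (Fin n) (Fin n) ℝ, X.PosSemidef ∧ X.trace = 1 ∧
      (Aᵀ * X * A + α • (Cᵀ * C)).trace • X = Aᵀ * X * A + α • (Cᵀ * C) := by
  have hCC : (Cᵀ * C).PosSemidef := by simpa using posSemidef_conjTranspose_mul_self C
  have hCCtr : 0 < (Cᵀ * C).trace := hCC.trace_nonneg.lt_of_ne' <| by
    simpa using trace_conjTranspose_mul_self_eq_zero_iff.not.mpr hC
  set M := α • (Cᵀ * C)
  have hM : M.PosSemidef := hCC.smul hα.le
  have hT : ∀ X, X.trace = 1 → conjAddTraceSMul A M X = Aᵀ * X * A + M := fun X hX => by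
    simp [hX]
  refine ⟨fun X hX hXtr => ?_, ?_⟩
  · have htr : 0 < (Aᵀ * X * A + M).trace := by
      rw [trace_add, trace_smul, smul_eq_mul]
      exact add_pos_of_nonneg_of_pos (hX.conjTranspose_mul_mul_same A).trace_nonneg
        (mul_pos hα hCCtr)
    refine ⟨(hT X hXtr ▸ posSemidef_conjAddTraceSMul A hM hX).smul (inv_nonneg.mpr htr.le), ?_⟩
    rw [trace_smul, smul_eq_mul, inv_mul_cancel₀ htr.ne']
  · have : Nonempty (Fin n) := not_isEmpty_iff.mp fun h => hC (ext fun _ j => h.elim j)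
    obtain ⟨Y, hY, hYtr, hTY⟩ :=
      exists_posSemidef_trace_eq_one_eigenvector fun _ => posSemidef_conjAddTraceSMul A hM
    rw [hT Y hYtr] at hTY
    exact ⟨Y, hY, hYtr, by rw [hTY, trace_smul, hYtr, smul_eq_mul, mul_one]⟩
end

section
/- Let A be an n×n real matrix and C a p×n real matrix such that (A, C) is observable (for every nonzero x₀ ∈ ℝⁿ there exists a natural number k with C Aᵏ x₀ ≠ 0). If α > 0, λ > 0, and X is a symmetric positive semidefinite n×n real matrix satisfying λ X = AᵀXA + α CᵀC, then X is positive definite. -/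
open Matrix

/-! Write `q y = yᵀ X y`. Applying the fixed-point relation to `y` gives
`λ q y = q (A y) + α ‖C y‖²` with both terms on the right nonnegative, so the isotropic vectors
of `X` (those with `q y = 0`) form an `A`-invariant set on which `C` vanishes. An isotropic
`x₀ ≠ 0` would therefore have `C Aᵏ x₀ = 0` for every `k`, contradicting observability. -/

namespace Matrix

variable {m n R : Type*} [Fintype m] [Fintype n]

theorem smul_dotProduct_mulVec_of_smul_eq_transpose_mul_mul_add [CommRing R]
    {A X : Matrix n n R} {C : Matrix m n R} {lam α : R}
    (hfix : lam • X = Aᵀ * X * A + α • (Cᵀ * C)) (y : n → R) :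
    lam * (y ⬝ᵥ X *ᵥ y) = (A *ᵥ y) ⬝ᵥ X *ᵥ (A *ᵥ y) + α * ((C *ᵥ y) ⬝ᵥ (C *ᵥ y)) := by
  have h := congrArg (fun M => y ⬝ᵥ M *ᵥ y) hfix
  simp only [smul_mulVec, dotProduct_smul, add_mulVec, dotProduct_add, dotProduct_mulVec,
    ← vecMul_vecMul, vecMul_transpose, smul_eq_mul] at h
  simpa only [dotProduct_mulVec, ← vecMul_vecMul] using h

variable [CommRing R] [LinearOrder R] [IsStrictOrderedRing R] [StarRing R] [TrivialStar R]
  {A X : Matrix n n R} {C : Matrix m n R} {lam α : R}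

theorem PosSemidef.dotProduct_mulVec_eq_zero_and_mulVec_eq_zero_of_smul_eq
    (hX : X.PosSemidef) (hα : 0 < α) (hfix : lam • X = Aᵀ * X * A + α • (Cᵀ * C))
    {y : n → R} (hy : y ⬝ᵥ X *ᵥ y = 0) :
    (A *ᵥ y) ⬝ᵥ X *ᵥ (A *ᵥ y) = 0 ∧ C *ᵥ y = 0 := by
  have h := smul_dotProduct_mulVec_of_smul_eq_transpose_mul_mul_add hfix y
  rw [hy, mul_zero] at h
  have hAy : 0 ≤ (A *ᵥ y) ⬝ᵥ X *ᵥ (A *ᵥ y) := by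
    simpa only [star_trivial] using hX.dotProduct_mulVec_nonneg (A *ᵥ y)
  have hCy : 0 ≤ α * ((C *ᵥ y) ⬝ᵥ (C *ᵥ y)) :=
    mul_nonneg hα.le (Finset.sum_nonneg fun i _ => mul_self_nonneg _)
  have hCy0 : α * ((C *ᵥ y) ⬝ᵥ (C *ᵥ y)) = 0 := by linarith
  exact ⟨by linarith, dotProduct_self_eq_zero.mp ((mul_eq_zero.mp hCy0).resolve_left hα.ne')⟩

theorem PosSemidef.dotProduct_pow_mulVec_eq_zero_of_smul_eq [DecidableEq n]
    (hX : X.PosSemidef) (hα : 0 < α) (hfix : lam • X = Aᵀ * X * A + α • (Cᵀ * C))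
    {y : n → R} (hy : y ⬝ᵥ X *ᵥ y = 0) (k : ℕ) :
    (A ^ k *ᵥ y) ⬝ᵥ X *ᵥ (A ^ k *ᵥ y) = 0 := by
  induction k with
  | zero => simpa using hy
  | succ k ih =>
    rw [pow_succ', ← mulVec_mulVec]
    exact (hX.dotProduct_mulVec_eq_zero_and_mulVec_eq_zero_of_smul_eq hα hfix ih).1

end Matrix

theorem stmt_11_general {n p : ℕ} (A : Matrix (Fin n) (Fin n) ℝ) (C : Matrix (Fin p) (Fin n) ℝ)
    (hobs : ∀ x₀ : Fin n → ℝ, x₀ ≠ 0 → ∃ k : ℕ, C *ᵥ ((A ^ k) *ᵥ x₀) ≠ 0)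
    (α lam : ℝ) (hα : 0 < α)
    (X : Matrix (Fin n) (Fin n) ℝ) (hX : X.PosSemidef)
    (hfix : lam • X = Aᵀ * X * A + α • (Cᵀ * C)) :
    X.PosDef := by
  refine posDef_iff_dotProduct_mulVec.mpr ⟨hX.isHermitian, fun x hx => ?_⟩
  have hx_nonneg : 0 ≤ x ⬝ᵥ X *ᵥ x := by
    simpa only [star_trivial] using hX.dotProduct_mulVec_nonneg x
  rw [star_trivial]
  refine hx_nonneg.lt_of_ne' fun hx0 => ?_
  obtain ⟨k, hk⟩ := hobs x hx
  exact hk (hX.dotProduct_mulVec_eq_zero_and_mulVec_eq_zero_of_smul_eq hα hfix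
    (hX.dotProduct_pow_mulVec_eq_zero_of_smul_eq hα hfix hx0 k)).2

/-- If `(A, C)` is observable, `α, λ > 0`, and `X` is symmetric positive semidefinite
with `λ X = AᵀXA + α CᵀC`, then `X` is positive definite. -/
theorem stmt_11 {n p : ℕ} (A : Matrix (Fin n) (Fin n) ℝ) (C : Matrix (Fin p) (Fin n) ℝ)
    (hobs : ∀ x₀ : Fin n → ℝ, x₀ ≠ 0 → ∃ k : ℕ, C *ᵥ ((A ^ k) *ᵥ x₀) ≠ 0)
    (α lam : ℝ) (hα : 0 < α) (hlam : 0 < lam)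
    (X : Matrix (Fin n) (Fin n) ℝ) (hX : X.PosSemidef)
    (hfix : lam • X = Aᵀ * X * A + α • (Cᵀ * C)) :
    X.PosDef :=
  stmt_11_general A C hobs α lam hα X hX hfix
end

section
/- Let A be an n×n real matrix and C a p×n real matrix such that (A, C) is observable, and let α > 0. Then the fixed point of the map f(X) = (AᵀXA + α CᵀC)/tr(AᵀXA + α CᵀC) on the set 𝒞 of symmetric positive semidefinite matrices with unit trace is unique: if X, Y ∈ 𝒞 satisfy tr(AᵀXA + α CᵀC)·X = AᵀXA + α CᵀC and tr(AᵀYA + α CᵀC)·Y = AᵀYA + α CᵀC, then X = Y. -/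
/-!
Let `T M = AᵀMA + α tr(M) CᵀC`, a linear map preserving positive semidefiniteness; on unit-trace
matrices the fixed points of `f` are exactly the eigenvectors `T X = λ X`. If `X ≠ Y` are two of
them, with `T X = λ X` and `T Y = μ Y`, let `t` be the largest scalar with `E = X - tY ⪰ 0`; then
`t < 1` and `E` is singular. Should `λ ≤ μ`, the matrix `T E = λE - t(μ - λ)Y` has nonpositive
quadratic form on `ker E`, which forces `ker E` to be `A`-invariant and contained in `ker C`;
observability then makes `ker E` trivial, a contradiction. Hence `μ < λ`, and by symmetry also
`λ < μ`.
-/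

open Matrix
open scoped MatrixOrder ComplexOrder

namespace Matrix

section PosSemidef

variable {ι 𝕜 : Type*} [Fintype ι] [RCLike 𝕜]

theorem isClosed_setOf_posSemidef_s12 : IsClosed {M : Matrix ι ι 𝕜 | M.PosSemidef} := by
  simp only [posSemidef_iff_dotProduct_mulVec, Set.ofPred_and, Set.ofPred_forall]
  refine (isClosed_eq continuous_id.matrix_conjTranspose continuous_id).inter
    (isClosed_iInter fun x => isClosed_le continuous_const ?_)
  fun_prop

variable [DecidableEq ι]

theorem PosDef.exists_pos_posSemidef_sub_smul {E Y : Matrix ι ι 𝕜} (hE : E.PosDef)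
    (hY : Y.IsHermitian) : ∃ η > (0 : ℝ), (E - η • Y).PosSemidef := by
  cases isEmpty_or_nonempty ι
  · exact ⟨1, one_pos, Subsingleton.elim 0 (E - (1 : ℝ) • Y) ▸ .zero⟩
  obtain ⟨r, hr, hrE⟩ := (CFC.exists_pos_algebraMap_le_iff hE.isHermitian.isSelfAdjoint).2
    fun x hx => hE.isStrictlyPositive.spectrum_pos hx
  obtain ⟨K, hK⟩ := (ContinuousFunctionalCalculus.isCompact_spectrum (R := ℝ) Y).bddAbove
  set K' := max K 1
  have hYK' : Y ≤ algebraMap ℝ _ K' :=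
    le_algebraMap_of_spectrum_le fun x hx => (hK hx).trans (le_max_left _ _)
  refine ⟨r / K', by positivity, ?_⟩
  rw [← le_iff]
  calc (r / K') • Y ≤ (r / K') • algebraMap ℝ _ K' :=
        smul_le_smul_of_nonneg_left hYK' (by positivity)
    _ = algebraMap ℝ _ r := by rw [Algebra.smul_def, ← map_mul, div_mul_cancel₀ _ (by positivity)]
    _ ≤ E := hrE

/-- The witness `t` is the largest scalar with `X - t • Y ⪰ 0`; maximality makes it singular. -/
theorem exists_singular_posSemidef_sub_smul {X Y : Matrix ι ι 𝕜} (hX : X.PosSemidef)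
    (hY : Y.PosSemidef) (hXtr : X.trace = 1) (hYtr : Y.trace = 1) (hXY : X ≠ Y) :
    ∃ t : ℝ, 0 ≤ t ∧ t < 1 ∧ (X - t • Y).PosSemidef ∧ ∃ w ≠ 0, (X - t • Y) *ᵥ w = 0 := by
  set S := {s : ℝ | (X - s • Y).PosSemidef}
  have hS0 : (0 : ℝ) ∈ S := by simpa [S] using hX
  have hS1 : ∀ s ∈ S, s ≤ 1 := fun s hs => by
    have := hs.trace_nonneg
    rw [trace_sub, trace_smul, hXtr, hYtr, RCLike.real_smul_eq_coe_mul, mul_one,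
      sub_nonneg] at this
    exact_mod_cast this
  have hSbdd : BddAbove S := ⟨1, hS1⟩
  obtain ⟨t, ht⟩ : ∃ t, IsGreatest S t :=
    ⟨_, (isClosed_setOf_posSemidef_s12.preimage (by fun_prop)).isGreatest_csSup ⟨0, hS0⟩ hSbdd⟩
  have htS : (X - t • Y).PosSemidef := ht.1
  have ht1 : t ≠ 1 := by
    rintro rfl
    rw [one_smul] at htS
    refine hXY (sub_eq_zero.mp (htS.trace_eq_zero_iff.mp ?_))
    rw [trace_sub, hXtr, hYtr, sub_self]
  refine ⟨t, ht.2 hS0, (hS1 t ht.1).lt_of_ne ht1, htS, ?_⟩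
  by_contra! hker
  have hE : (X - t • Y).PosDef := htS.posDef_iff_det_ne_zero.mpr fun h =>
    let ⟨w, hw, hEw⟩ := exists_mulVec_eq_zero_iff.mpr h
    hker w hw hEw
  obtain ⟨η, hη, hEη⟩ := hE.exists_pos_posSemidef_sub_smul hY.isHermitian
  have : t + η ∈ S := by simpa [S, add_smul, sub_sub] using hEη
  linarith [ht.2 this]

end PosSemidef

end Matrix

section Observability

variable {ι κ : Type*} [Fintype ι] [DecidableEq ι]

def Observable (A : Matrix ι ι ℝ) (C : Matrix κ ι ℝ) : Prop :=
  ∀ x₀ : ι → ℝ, x₀ ≠ 0 → ∃ k : ℕ, C *ᵥ ((A ^ k) *ᵥ x₀) ≠ 0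

theorem Observable.eq_zero_of_invariant {A : Matrix ι ι ℝ} {C : Matrix κ ι ℝ}
    (hobs : Observable A C) {P : (ι → ℝ) → Prop} (hA : ∀ v, P v → P (A *ᵥ v))
    (hC : ∀ v, P v → C *ᵥ v = 0) {v : ι → ℝ} (hv : P v) : v = 0 := by
  have hpow : ∀ k : ℕ, P ((A ^ k) *ᵥ v) := by
    intro k
    induction k with
    | zero => simpa using hv
    | succ k ih => simpa [pow_succ', ← mulVec_mulVec] using hA _ ih
  by_contra hv0
  obtain ⟨k, hk⟩ := hobs v hv0
  exact hk (hC _ (hpow k))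

variable [Fintype κ]

/-- On unit-trace matrices `lyapunovMap A C α X = AᵀXA + α CᵀC`, the numerator of the map `f`. -/
def lyapunovMap (A : Matrix ι ι ℝ) (C : Matrix κ ι ℝ) (α : ℝ) :
    Matrix ι ι ℝ →ₗ[ℝ] Matrix ι ι ℝ where
  toFun M := Aᵀ * M * A + (α * M.trace) • (Cᵀ * C)
  map_add' M N := by
    simp only [Matrix.add_mul, trace_add, mul_add, add_smul]
    abel
  map_smul' c M := by
    simp only [Matrix.mul_smul, Matrix.smul_mul, trace_smul, smul_eq_mul, RingHom.id_apply,
      smul_add, smul_smul, mul_left_comm]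

variable {A : Matrix ι ι ℝ} {C : Matrix κ ι ℝ} {α : ℝ}

theorem lyapunovMap_apply (M : Matrix ι ι ℝ) :
    lyapunovMap A C α M = Aᵀ * M * A + (α * M.trace) • (Cᵀ * C) := rfl

theorem dotProduct_lyapunovMap_mulVec (M : Matrix ι ι ℝ) (v : ι → ℝ) :
    v ⬝ᵥ lyapunovMap A C α M *ᵥ v
      = (A *ᵥ v) ⬝ᵥ M *ᵥ (A *ᵥ v) + α * M.trace * ((C *ᵥ v) ⬝ᵥ (C *ᵥ v)) := by
  simp only [lyapunovMap_apply, add_mulVec, smul_mulVec, dotProduct_add, dotProduct_smul,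
    smul_eq_mul, ← mulVec_mulVec, dotProduct_mulVec _ Aᵀ, dotProduct_mulVec _ Cᵀ,
    vecMul_transpose]

theorem Matrix.PosSemidef.mulVec_mulVec_eq_zero_and_mulVec_eq_zero (hα : 0 < α)
    {E : Matrix ι ι ℝ} (hE : E.PosSemidef) (htr : 0 < E.trace) {v : ι → ℝ}
    (hTv : v ⬝ᵥ lyapunovMap A C α E *ᵥ v ≤ 0) :
    E *ᵥ (A *ᵥ v) = 0 ∧ C *ᵥ v = 0 := by
  rw [dotProduct_lyapunovMap_mulVec] at hTv
  have hEA : 0 ≤ (A *ᵥ v) ⬝ᵥ E *ᵥ (A *ᵥ v) := by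
    simpa only [star_trivial] using hE.dotProduct_mulVec_nonneg (A *ᵥ v)
  have hCC : 0 ≤ (C *ᵥ v) ⬝ᵥ (C *ᵥ v) := Fintype.sum_nonneg fun i => mul_self_nonneg _
  have hpos : 0 < α * E.trace := mul_pos hα htr
  constructor
  · simpa using (hE.dotProduct_mulVec_zero_iff (A *ᵥ v)).mp (by rw [star_trivial]; nlinarith)
  · exact dotProduct_self_eq_zero.mp (by nlinarith)

theorem Observable.eq_zero_of_mulVec_eq_zero (hobs : Observable A C) (hα : 0 < α)
    {E : Matrix ι ι ℝ} (hE : E.PosSemidef) (htr : 0 < E.trace)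
    (hT : ∀ v, E *ᵥ v = 0 → v ⬝ᵥ lyapunovMap A C α E *ᵥ v ≤ 0) {v : ι → ℝ}
    (hv : E *ᵥ v = 0) : v = 0 :=
  hobs.eq_zero_of_invariant
    (fun w hw => (hE.mulVec_mulVec_eq_zero_and_mulVec_eq_zero hα htr (hT w hw)).1)
    (fun w hw => (hE.mulVec_mulVec_eq_zero_and_mulVec_eq_zero hα htr (hT w hw)).2) hv

theorem Observable.eigenvalue_lt_of_ne (hobs : Observable A C) (hα : 0 < α)
    {X Y : Matrix ι ι ℝ} (hX : X.PosSemidef) (hY : Y.PosSemidef) (hXtr : X.trace = 1)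
    (hYtr : Y.trace = 1) {l m : ℝ} (hTX : lyapunovMap A C α X = l • X)
    (hTY : lyapunovMap A C α Y = m • Y) (hXY : X ≠ Y) : m < l := by
  by_contra! hlm
  obtain ⟨t, ht0, ht1, hE, w, hw, hEw⟩ :=
    exists_singular_posSemidef_sub_smul hX hY hXtr hYtr hXY
  have hTE : lyapunovMap A C α (X - t • Y) = l • (X - t • Y) - (t * (m - l)) • Y := by
    rw [map_sub, map_smul, hTX, hTY]
    module
  have htr : 0 < (X - t • Y).trace := by
    rw [trace_sub, trace_smul, hXtr, hYtr, smul_eq_mul, mul_one, sub_pos]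
    exact ht1
  refine hw (hobs.eq_zero_of_mulVec_eq_zero hα hE htr (fun v hv => ?_) hEw)
  have hYv : 0 ≤ v ⬝ᵥ Y *ᵥ v := by simpa only [star_trivial] using hY.dotProduct_mulVec_nonneg v
  rw [hTE, sub_mulVec, smul_mulVec, smul_mulVec, hv, smul_zero, zero_sub, dotProduct_neg,
    dotProduct_smul, smul_eq_mul, neg_nonpos]
  exact mul_nonneg (mul_nonneg ht0 (sub_nonneg.mpr hlm)) hYv

end Observability

/-- If `(A, C)` is observable and `α > 0`, then the fixed point of
`f(X) = (AᵀXA + α CᵀC)/tr(AᵀXA + α CᵀC)` on the set of symmetric positive semidefinite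
matrices with unit trace is unique. -/
theorem stmt_12 {n p : ℕ} (A : Matrix (Fin n) (Fin n) ℝ) (C : Matrix (Fin p) (Fin n) ℝ)
    (hobs : ∀ x₀ : Fin n → ℝ, x₀ ≠ 0 → ∃ k : ℕ, C *ᵥ ((A ^ k) *ᵥ x₀) ≠ 0)
    (α : ℝ) (hα : 0 < α)
    (X Y : Matrix (Fin n) (Fin n) ℝ)
    (hX : X.PosSemidef) (hXtr : X.trace = 1)
    (hY : Y.PosSemidef) (hYtr : Y.trace = 1)
    (hfixX : (Aᵀ * X * A + α • (Cᵀ * C)).trace • X = Aᵀ * X * A + α • (Cᵀ * C))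
    (hfixY : (Aᵀ * Y * A + α • (Cᵀ * C)).trace • Y = Aᵀ * Y * A + α • (Cᵀ * C)) :
    X = Y := by
  have hTX : lyapunovMap A C α X = (lyapunovMap A C α X).trace • X := by
    rw [lyapunovMap_apply, hXtr, mul_one]
    exact hfixX.symm
  have hTY : lyapunovMap A C α Y = (lyapunovMap A C α Y).trace • Y := by
    rw [lyapunovMap_apply, hYtr, mul_one]
    exact hfixY.symm
  by_contra hXY
  exact lt_asymm (Observable.eigenvalue_lt_of_ne hobs hα hX hY hXtr hYtr hTX hTY hXY)
    (Observable.eigenvalue_lt_of_ne hobs hα hY hX hYtr hXtr hTY hTX (Ne.symm hXY))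
end

section
/- Let A be an n×n real matrix. If there exist a real number λ ≥ 1 and a nonzero symmetric positive semidefinite n×n real matrix X with AᵀXA = λX, then the system x_{k+1} = A x_k is not asymptotically stable: there exists x₀ ∈ ℝⁿ such that Aᵏx₀ does not tend to 0 as k → ∞. -/
/-!
The quadratic form `q x = xᵀ X x` satisfies `q (A x) = λ q x`, so along any trajectory
`q (Aᵏ x₀) = λᵏ q x₀ ≥ q x₀`. Since `X` is positive semidefinite and nonzero, some `x₀` has
`q x₀ > 0`; if `Aᵏ x₀ → 0`, continuity of `q` would force `q x₀ ≤ q 0 = 0`.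
-/

open Filter Matrix
open scoped ComplexOrder

namespace Matrix

theorem PosSemidef.exists_dotProduct_mulVec_pos {m 𝕜 : Type*} [Fintype m] [RCLike 𝕜]
    {X : Matrix m m 𝕜} (hX : X.PosSemidef) (hX0 : X ≠ 0) :
    ∃ x, 0 < star x ⬝ᵥ X *ᵥ x := by
  by_contra! h
  refine hX0 (ext_iff_mulVec.mpr fun x => ?_)
  rw [zero_mulVec, ← hX.dotProduct_mulVec_zero_iff]
  exact (eq_of_le_of_not_lt (hX.dotProduct_mulVec_nonneg x) (h x)).symm

variable {m R : Type*} [Fintype m] [CommSemiring R]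

theorem dotProduct_mulVec_mulVec_transpose_mul_mul {k : Type*} [Fintype k]
    (A : Matrix m k R) (X : Matrix m m R) (x : k → R) :
    (A *ᵥ x) ⬝ᵥ X *ᵥ (A *ᵥ x) = x ⬝ᵥ (Aᵀ * X * A) *ᵥ x := by
  rw [mulVec_mulVec, dotProduct_mulVec, dotProduct_mulVec, ← vecMul_transpose, vecMul_vecMul,
    Matrix.mul_assoc]

theorem dotProduct_pow_mulVec_of_transpose_mul_mul_eq_smul [DecidableEq m]
    {A X : Matrix m m R} {c : R} (h : Aᵀ * X * A = c • X) (x : m → R) (k : ℕ) :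
    (A ^ k *ᵥ x) ⬝ᵥ X *ᵥ (A ^ k *ᵥ x) = c ^ k * (x ⬝ᵥ X *ᵥ x) := by
  induction k with
  | zero => simp
  | succ k ih =>
    rw [pow_succ', ← mulVec_mulVec, dotProduct_mulVec_mulVec_transpose_mul_mul, h, smul_mulVec,
      dotProduct_smul, smul_eq_mul, ih, pow_succ', mul_assoc]

end Matrix

/-- If there exist `λ ≥ 1` and a nonzero symmetric positive semidefinite `X` with
`AᵀXA = λX`, then the system `x_{k+1} = A x_k` is not asymptotically stable. -/
theorem stmt_13 {n : ℕ} (A : Matrix (Fin n) (Fin n) ℝ)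
    (lam : ℝ) (hlam : 1 ≤ lam)
    (X : Matrix (Fin n) (Fin n) ℝ) (hX : X.PosSemidef) (hX0 : X ≠ 0)
    (heig : Aᵀ * X * A = lam • X) :
    ∃ x₀ : Fin n → ℝ, ¬ Tendsto (fun k : ℕ => (A ^ k) *ᵥ x₀) atTop (nhds 0) := by
  obtain ⟨x₀, hx₀⟩ := hX.exists_dotProduct_mulVec_pos hX0
  rw [star_trivial] at hx₀
  refine ⟨x₀, fun hT => ?_⟩
  have hq : Continuous fun x : Fin n → ℝ => x ⬝ᵥ X *ᵥ x :=
    continuous_id.dotProduct (continuous_const.matrix_mulVec continuous_id)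
  have hqT : Tendsto (fun k => (A ^ k *ᵥ x₀) ⬝ᵥ X *ᵥ (A ^ k *ᵥ x₀)) atTop (nhds 0) :=
    (hq.tendsto' 0 0 (by simp)).comp hT
  have hgrowth (k : ℕ) : x₀ ⬝ᵥ X *ᵥ x₀ ≤ (A ^ k *ᵥ x₀) ⬝ᵥ X *ᵥ (A ^ k *ᵥ x₀) := by
    rw [dotProduct_pow_mulVec_of_transpose_mul_mul_eq_smul heig]
    exact le_mul_of_one_le_left hx₀.le (one_le_pow₀ hlam)
  exact (ge_of_tendsto' hqT hgrowth).not_gt hx₀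
end

section
/- Let A be an n×n real matrix with all entries nonnegative and c a nonnegative nonzero row vector in ℝⁿ. If the system x_{k+1} = A x_k is asymptotically stable (for every x₀ ∈ ℝⁿ, Aᵏx₀ → 0 as k → ∞) and (A, c) is observable (for every nonzero x₀ ∈ ℝⁿ there exists a natural number k with c Aᵏ x₀ ≠ 0), then there exists a row vector q ∈ ℝⁿ with all entries strictly positive satisfying q = c + qA. -/
/-!
Stability forces `1 - A` to be invertible, so `q := c (1 - A)⁻¹` solves `q = c + qA`.
Unrolling this equation gives `q = ∑_{k<N} c Aᵏ + q Aᴺ`, and `q Aᴺ → 0` by stability. Every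
`c Aᵏ` is nonnegative, so `q ≥ 0` in the limit, and then `q ≥ c Aᵏ` entrywise for each `k`.
Observability, applied to the `i`-th basis vector, yields a `k` with `(c Aᵏ)ᵢ ≠ 0`, hence `qᵢ > 0`.
-/

open Filter Matrix Topology

namespace Matrix

variable {m n R : Type*} [Fintype n]

theorem vecMul_apply_nonneg [Semiring R] [PartialOrder R] [IsOrderedRing R] {v : n → R}
    {M : Matrix n m R} (hv : ∀ i, 0 ≤ v i) (hM : ∀ i j, 0 ≤ M i j) (j : m) : 0 ≤ (v ᵥ* M) j :=
  Finset.sum_nonneg fun i _ => mul_nonneg (hv i) (hM i j)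

variable [DecidableEq n]

theorem eq_sum_vecMul_pow_add [Semiring R] {A : Matrix n n R} {c q : n → R}
    (hq : q = c + q ᵥ* A) (N : ℕ) :
    q = ∑ k ∈ Finset.range N, c ᵥ* (A ^ k) + q ᵥ* (A ^ N) := by
  induction N with
  | zero => simp
  | succ N ih =>
    conv_lhs => rw [ih, hq, add_vecMul, vecMul_vecMul, ← pow_succ']
    rw [Finset.sum_range_succ, add_assoc]

theorem eq_add_vecMul_of_isUnit_one_sub [CommRing R] {A : Matrix n n R} (hA : IsUnit (1 - A))
    (c : n → R) : c ᵥ* (1 - A)⁻¹ = c + (c ᵥ* (1 - A)⁻¹) ᵥ* A := by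
  have hsolve : (c ᵥ* (1 - A)⁻¹) ᵥ* (1 - A) = c := by
    rw [vecMul_vecMul, nonsing_inv_mul _ ((isUnit_iff_isUnit_det _).mp hA), vecMul_one]
  rw [vecMul_sub, vecMul_one] at hsolve
  exact sub_eq_iff_eq_add.mp hsolve

theorem isUnit_one_sub_of_tendsto_pow_mulVec [Field R] [TopologicalSpace R] [T2Space R]
    {A : Matrix n n R} (hA : ∀ x, Tendsto (fun k : ℕ => (A ^ k) *ᵥ x) atTop (𝓝 0)) :
    IsUnit (1 - A) := by
  refine mulVec_injective_iff_isUnit.mp fun x y hxy => sub_eq_zero.mp ?_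
  have hker : (1 - A) *ᵥ (x - y) = 0 := by rw [mulVec_sub, hxy, sub_self]
  have hfix : A *ᵥ (x - y) = x - y := by
    rw [sub_mulVec, one_mulVec, sub_eq_zero] at hker
    exact hker.symm
  have hpow (k : ℕ) : (A ^ k) *ᵥ (x - y) = x - y := by
    induction k with
    | zero => simp
    | succ k ih => rw [pow_succ', ← mulVec_mulVec, ih, hfix]
  exact tendsto_nhds_unique tendsto_const_nhds (by simpa only [hpow] using hA (x - y))

theorem tendsto_vecMul_pow_of_tendsto_pow_mulVec [Semiring R] [TopologicalSpace R]
    [IsTopologicalSemiring R] {A : Matrix n n R}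
    (hA : ∀ x, Tendsto (fun k : ℕ => (A ^ k) *ᵥ x) atTop (𝓝 0)) (v : n → R) :
    Tendsto (fun k : ℕ => v ᵥ* (A ^ k)) atTop (𝓝 0) := by
  refine tendsto_pi_nhds.2 fun i => ?_
  have h := ((continuous_const (y := v)).dotProduct continuous_id).tendsto 0 |>.comp
    (hA (Pi.single i 1))
  simpa only [Function.comp_def, dotProduct_mulVec, dotProduct_single, mul_one, id,
    dotProduct_zero, Pi.zero_apply] using h

section Nonneg

variable [PartialOrder R] {A : Matrix n n R} {c q : n → R}

theorem nonneg_of_eq_add_vecMul [Ring R] [IsOrderedRing R] [TopologicalSpace R]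
    [OrderClosedTopology R] [IsTopologicalRing R] (hA : ∀ i j, 0 ≤ A i j) (hc : ∀ i, 0 ≤ c i)
    (hq : q = c + q ᵥ* A) (hlim : Tendsto (fun N : ℕ => q ᵥ* (A ^ N)) atTop (𝓝 0)) (i : n) :
    0 ≤ q i := by
  have hpartial (N : ℕ) : 0 ≤ q i - (q ᵥ* (A ^ N)) i := by
    rw [sub_nonneg, congrFun (eq_sum_vecMul_pow_add hq N) i, Pi.add_apply, le_add_iff_nonneg_left,
      Finset.sum_apply]
    exact Finset.sum_nonneg fun k _ => vecMul_apply_nonneg hc (pow_apply_nonneg hA k) i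
  simpa using ge_of_tendsto' (tendsto_const_nhds.sub (tendsto_pi_nhds.1 hlim i)) hpartial

theorem vecMul_pow_apply_le [Semiring R] [IsOrderedRing R] (hA : ∀ i j, 0 ≤ A i j)
    (hc : ∀ i, 0 ≤ c i) (hq0 : ∀ i, 0 ≤ q i) (hq : q = c + q ᵥ* A) (k : ℕ) (i : n) :
    (c ᵥ* (A ^ k)) i ≤ q i := by
  have hcA (j : ℕ) : 0 ≤ (c ᵥ* (A ^ j)) i := vecMul_apply_nonneg hc (pow_apply_nonneg hA j) i
  calc (c ᵥ* (A ^ k)) i ≤ ∑ j ∈ Finset.range (k + 1), (c ᵥ* (A ^ j)) i :=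
        Finset.single_le_sum (fun j _ => hcA j) (Finset.self_mem_range_succ k)
    _ ≤ ∑ j ∈ Finset.range (k + 1), (c ᵥ* (A ^ j)) i + (q ᵥ* (A ^ (k + 1))) i :=
        le_add_of_nonneg_right (vecMul_apply_nonneg hq0 (pow_apply_nonneg hA _) i)
    _ = q i := by rw [← Finset.sum_apply, ← Pi.add_apply, ← eq_sum_vecMul_pow_add hq]

end Nonneg

end Matrix

theorem stmt_16_general {n : ℕ} (A : Matrix (Fin n) (Fin n) ℝ) (c : Fin n → ℝ)
    (hA : ∀ i j, 0 ≤ A i j) (hc : ∀ i, 0 ≤ c i)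
    (hstab : ∀ x₀ : Fin n → ℝ,
      Tendsto (fun k : ℕ => (A ^ k) *ᵥ x₀) atTop (nhds 0))
    (hobs : ∀ x₀ : Fin n → ℝ, x₀ ≠ 0 → ∃ k : ℕ, c ⬝ᵥ ((A ^ k) *ᵥ x₀) ≠ 0) :
    ∃ q : Fin n → ℝ, (∀ i, 0 < q i) ∧ q = c + q ᵥ* A := by
  set q := c ᵥ* (1 - A)⁻¹
  have hq : q = c + q ᵥ* A :=
    eq_add_vecMul_of_isUnit_one_sub (isUnit_one_sub_of_tendsto_pow_mulVec hstab) c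
  have hq0 := nonneg_of_eq_add_vecMul hA hc hq (tendsto_vecMul_pow_of_tendsto_pow_mulVec hstab q)
  refine ⟨q, fun i => ?_, hq⟩
  obtain ⟨k, hk⟩ := hobs (Pi.single i 1) (Pi.single_ne_zero_iff.mpr one_ne_zero)
  rw [dotProduct_mulVec, dotProduct_single, mul_one] at hk
  exact (vecMul_apply_nonneg hc (pow_apply_nonneg hA k) i).lt_of_ne' hk
    |>.trans_le (vecMul_pow_apply_le hA hc hq0 hq k i)

/-- For an internally positive system (`A` and `c` entrywise nonnegative, `c ≠ 0`),
asymptotic stability and observability imply the existence of an entrywise strictly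
positive row vector `q` with `q = c + qA`. -/
theorem stmt_16 {n : ℕ} (A : Matrix (Fin n) (Fin n) ℝ) (c : Fin n → ℝ)
    (hA : ∀ i j, 0 ≤ A i j) (hc : ∀ i, 0 ≤ c i) (hc0 : c ≠ 0)
    (hstab : ∀ x₀ : Fin n → ℝ,
      Tendsto (fun k : ℕ => (A ^ k) *ᵥ x₀) atTop (nhds 0))
    (hobs : ∀ x₀ : Fin n → ℝ, x₀ ≠ 0 → ∃ k : ℕ, c ⬝ᵥ ((A ^ k) *ᵥ x₀) ≠ 0) :
    ∃ q : Fin n → ℝ, (∀ i, 0 < q i) ∧ q = c + q ᵥ* A :=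
  stmt_16_general A c hA hc hstab hobs
end

section
/- Let A be an n×n real matrix with all entries nonnegative and c a nonnegative row vector in ℝⁿ. If (A, c) is observable (for every nonzero x₀ ∈ ℝⁿ there exists a natural number k with c Aᵏ x₀ ≠ 0) and there exists a row vector q ∈ ℝⁿ with all entries strictly positive satisfying q = c + qA, then the system x_{k+1} = A x_k is asymptotically stable restricted to nonnegative initial conditions: for every x₀ ∈ ℝⁿ with nonnegative entries, Aᵏx₀ → 0 as k → ∞. -/
/-!
The linear function `V x = q ⬝ᵥ x` is a Lyapunov function on the nonnegative orthant: along a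
trajectory `yₖ = Aᵏ x₀` it decreases by exactly `c ⬝ᵥ yₖ ≥ 0` at each step, so the outputs
`c ⬝ᵥ yₖ` are summable and tend to `0`. Then every shifted output `c ⬝ᵥ Aʲ yₖ = c ⬝ᵥ yₖ₊ⱼ` tends
to `0` as well, and observability makes `x ↦ (c ⬝ᵥ Aʲ x)ⱼ` an injective linear map on a
finite-dimensional space, hence a topological embedding, which forces `yₖ → 0`.
-/

open Filter Matrix Topology

namespace Matrix

variable {n R : Type*} [Fintype n] [DecidableEq n]

lemma pow_mulVec_nonneg [Semiring R] [PartialOrder R] [IsOrderedRing R] {A : Matrix n n R}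
    (hA : ∀ i j, 0 ≤ A i j) {x : n → R} (hx : 0 ≤ x) (k : ℕ) : 0 ≤ A ^ k *ᵥ x := by
  induction k with
  | zero => simpa using hx
  | succ k ih =>
    rw [pow_succ', ← mulVec_mulVec]
    exact fun i => dotProduct_nonneg_of_nonneg (hA i) ih

lemma sum_range_dotProduct_pow_mulVec [Ring R] {A : Matrix n n R} {c q : n → R}
    (hq : q = c + q ᵥ* A) (x : n → R) (N : ℕ) :
    ∑ k ∈ Finset.range N, c ⬝ᵥ (A ^ k *ᵥ x) = q ⬝ᵥ x - q ⬝ᵥ (A ^ N *ᵥ x) := by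
  induction N with
  | zero => simp
  | succ N ih =>
    have hqA : q ᵥ* A = q - c := eq_sub_of_add_eq' hq.symm
    rw [Finset.sum_range_succ, ih, pow_succ', ← mulVec_mulVec, dotProduct_mulVec q A, hqA,
      sub_dotProduct]
    abel

theorem tendsto_dotProduct_pow_mulVec_atTop_zero {A : Matrix n n ℝ} {c q : n → ℝ}
    (hA : ∀ i j, 0 ≤ A i j) (hc : 0 ≤ c) (hq₀ : 0 ≤ q) (hq : q = c + q ᵥ* A) {x : n → ℝ}
    (hx : 0 ≤ x) : Tendsto (fun k => c ⬝ᵥ (A ^ k *ᵥ x)) atTop (𝓝 0) := by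
  refine (summable_of_sum_range_le (c := q ⬝ᵥ x) (fun k => ?_) fun N => ?_).tendsto_atTop_zero
  · exact dotProduct_nonneg_of_nonneg hc (pow_mulVec_nonneg hA hx k)
  · rw [sum_range_dotProduct_pow_mulVec hq]
    exact sub_le_self _ (dotProduct_nonneg_of_nonneg hq₀ (pow_mulVec_nonneg hA hx N))

variable [CommRing R]

def observabilityMap_s18 (A : Matrix n n R) (c : n → R) : (n → R) →ₗ[R] (ℕ → R) where
  toFun x j := c ⬝ᵥ (A ^ j *ᵥ x)
  map_add' x y := by ext j; simp [mulVec_add, dotProduct_add]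
  map_smul' r x := by ext j; simp [mulVec_smul]

@[simp]
lemma observabilityMap_apply (A : Matrix n n R) (c x : n → R) (j : ℕ) :
    observabilityMap_s18 A c x j = c ⬝ᵥ (A ^ j *ᵥ x) :=
  rfl

lemma ker_observabilityMap_eq_bot {A : Matrix n n R} {c : n → R}
    (hobs : ∀ x : n → R, x ≠ 0 → ∃ k : ℕ, c ⬝ᵥ (A ^ k *ᵥ x) ≠ 0) :
    LinearMap.ker (observabilityMap_s18 A c) = ⊥ := by
  refine LinearMap.ker_eq_bot'.mpr fun x hx => ?_
  by_contra hx₀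
  obtain ⟨k, hk⟩ := hobs x hx₀
  exact hk (congrFun hx k)

lemma tendsto_nhds_of_tendsto_observabilityMap {ι : Type*} {A : Matrix n n ℝ} {c : n → ℝ}
    (hker : LinearMap.ker (observabilityMap_s18 A c) = ⊥) {l : Filter ι} {y : ι → n → ℝ}
    {x : n → ℝ}
    (h : Tendsto (fun i => observabilityMap_s18 A c (y i)) l (𝓝 (observabilityMap_s18 A c x))) :
    Tendsto y l (𝓝 x) :=
  (LinearMap.isClosedEmbedding_of_injective hker).isEmbedding.tendsto_nhds_iff.mpr h

end Matrix

/-- For `A` and `c` entrywise nonnegative, if `(A, c)` is observable and there is an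
entrywise strictly positive row vector `q` with `q = c + qA`, then for every entrywise
nonnegative initial condition `x₀`, `Aᵏx₀ → 0` as `k → ∞`. -/
theorem stmt_18 {n : ℕ} (A : Matrix (Fin n) (Fin n) ℝ) (c : Fin n → ℝ)
    (hA : ∀ i j, 0 ≤ A i j) (hc : ∀ i, 0 ≤ c i)
    (hobs : ∀ x₀ : Fin n → ℝ, x₀ ≠ 0 → ∃ k : ℕ, c ⬝ᵥ ((A ^ k) *ᵥ x₀) ≠ 0)
    (hq : ∃ q : Fin n → ℝ, (∀ i, 0 < q i) ∧ q = c + q ᵥ* A) :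
    ∀ x₀ : Fin n → ℝ, (∀ i, 0 ≤ x₀ i) →
      Tendsto (fun k : ℕ => (A ^ k) *ᵥ x₀) atTop (nhds 0) := by
  obtain ⟨q, hq₀, hq⟩ := hq
  intro x₀ hx₀
  have houtput := tendsto_dotProduct_pow_mulVec_atTop_zero hA hc (fun i => (hq₀ i).le) hq hx₀
  refine tendsto_nhds_of_tendsto_observabilityMap (ker_observabilityMap_eq_bot hobs) ?_
  rw [map_zero, tendsto_pi_nhds]
  intro j
  simpa only [observabilityMap_apply, Pi.zero_apply, mulVec_mulVec, ← pow_add, add_comm j]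
    using (tendsto_add_atTop_iff_nat j).mpr houtput
end

section
/- Let A be an n×n real matrix with all entries nonnegative and c a nonzero nonnegative row vector in ℝⁿ, and let α > 0. Then the map f(x) = (xA + αc) / (Σ_k (xA)_k + α c_k), defined on the unit simplex 𝒞 = {x ∈ ℝⁿ : x ≥ 0 entrywise, Σ_k x_k = 1} of row vectors, maps 𝒞 into 𝒞 and has a fixed point: there exists x ∈ 𝒞 with (Σ_k (xA)_k + α c_k) · x = xA + αc. -/
/-!
A fixed point of `f` is a Perron vector on the simplex of the nonnegative matrix
`B = A + α 𝟙c`, because `xB = xA + αc` whenever `Σ x = 1`; the denominator is at least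
`α Σ c > 0`. Perron vectors of positive matrices come from the Collatz–Wielandt argument:
maximize `λ` over the compact set of pairs with `λx ≤ xP`; at a maximizer any slack becomes
strictly positive after one more multiplication by `P` and allows a larger `λ`. A nonnegative
`B` is the limit of the positive matrices `B + εJ`, and having a Perron vector on the compact
simplex is a closed condition on the matrix.
-/

open Matrix Finset Filter Topology

section PerronFrobenius

variable {ι κ : Type*} [Fintype ι]

lemma vecMul_nonneg {x : ι → ℝ} {B : Matrix ι κ ℝ} (hx : 0 ≤ x) (hB : ∀ i j, 0 ≤ B i j) :
    0 ≤ x ᵥ* B :=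
  fun j => sum_nonneg fun i _ => mul_nonneg (hx i) (hB i j)

lemma vecMul_apply_pos {x : ι → ℝ} {P : Matrix ι κ ℝ} (hx : 0 < x) (hP : ∀ i j, 0 < P i j)
    (j : κ) : 0 < (x ᵥ* P) j := by
  obtain ⟨i, hi⟩ := (Pi.lt_def.1 hx).2
  exact sum_pos' (fun k _ => mul_nonneg (hx.le k) (hP k j).le)
    ⟨i, mem_univ i, mul_pos hi (hP i j)⟩

lemma inv_sum_smul_mem_stdSimplex {v : ι → ℝ} (hv : 0 < v) :
    (∑ i, v i)⁻¹ • v ∈ stdSimplex ℝ ι := by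
  have hs : 0 < ∑ i, v i := Fintype.sum_pos hv
  refine ⟨fun i => mul_nonneg (inv_nonneg.2 hs.le) (hv.le i), ?_⟩
  simp only [Pi.smul_apply, smul_eq_mul, ← mul_sum]
  exact inv_mul_cancel₀ hs.ne'

lemma pos_of_mem_stdSimplex {x : ι → ℝ} (hx : x ∈ stdSimplex ℝ ι) : 0 < x := by
  refine lt_of_le_of_ne hx.1 fun h => ?_
  simpa [← h] using hx.2

lemma eq_sum_of_vecMul_eq_smul {x : ι → ℝ} {B : Matrix ι ι ℝ} {l : ℝ}
    (hx : x ∈ stdSimplex ℝ ι) (h : x ᵥ* B = l • x) : l = ∑ j, (x ᵥ* B) j := by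
  simp only [h, Pi.smul_apply, smul_eq_mul, ← mul_sum, hx.2, mul_one]

def collatzWielandtSet (P : Matrix ι ι ℝ) : Set (ℝ × (ι → ℝ)) :=
  {p | 0 ≤ p.1 ∧ p.2 ∈ stdSimplex ℝ ι ∧ p.1 • p.2 ≤ p.2 ᵥ* P}

lemma isClosed_collatzWielandtSet (P : Matrix ι ι ℝ) : IsClosed (collatzWielandtSet P) :=
  (isClosed_le continuous_const continuous_fst).inter
    (((isClosed_stdSimplex ℝ ι).preimage continuous_snd).inter
      (isClosed_le (continuous_fst.smul continuous_snd)
        (continuous_snd.matrix_vecMul continuous_const)))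

lemma fst_le_of_mem_collatzWielandtSet {P : Matrix ι ι ℝ} (hP : ∀ i j, 0 ≤ P i j)
    {p : ℝ × (ι → ℝ)} (hp : p ∈ collatzWielandtSet P) : p.1 ≤ ∑ i, ∑ j, P i j := by
  obtain ⟨-, hx, hle⟩ := hp
  calc p.1 = ∑ j, p.1 * p.2 j := by rw [← mul_sum, hx.2, mul_one]
    _ ≤ ∑ j, ∑ i, p.2 i * P i j := sum_le_sum fun j _ => hle j
    _ ≤ ∑ j, ∑ i, P i j := sum_le_sum fun j _ => sum_le_sum fun i _ =>
          mul_le_of_le_one_left (hP i j) (mem_Icc_of_mem_stdSimplex hx i).2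
    _ = ∑ i, ∑ j, P i j := sum_comm

lemma isCompact_collatzWielandtSet {P : Matrix ι ι ℝ} (hP : ∀ i j, 0 ≤ P i j) :
    IsCompact (collatzWielandtSet P) :=
  (isCompact_Icc.prod (isCompact_stdSimplex ℝ ι)).of_isClosed_subset
    (isClosed_collatzWielandtSet P)
    fun _ hp => ⟨⟨hp.1, fst_le_of_mem_collatzWielandtSet hP hp⟩, hp.2.1⟩

lemma collatzWielandtSet_nonempty [Nonempty ι] {P : Matrix ι ι ℝ} (hP : ∀ i j, 0 ≤ P i j) :
    (collatzWielandtSet P).Nonempty := by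
  classical
  obtain ⟨i⟩ := ‹Nonempty ι›
  refine ⟨(0, Pi.single i 1), le_rfl, single_mem_stdSimplex ℝ i, ?_⟩
  rw [zero_smul]
  exact vecMul_nonneg (single_mem_stdSimplex ℝ i).1 hP

lemma exists_gt_of_mem_collatzWielandtSet {P : Matrix ι ι ℝ} (hP : ∀ i j, 0 < P i j)
    {l : ℝ} {x : ι → ℝ} (hlx : (l, x) ∈ collatzWielandtSet P) (hne : x ᵥ* P ≠ l • x) :
    ∃ p ∈ collatzWielandtSet P, l < p.1 := by
  obtain ⟨hl, hx, hle⟩ := hlx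
  have hx₀ := pos_of_mem_stdSimplex hx
  obtain ⟨i, -⟩ := (Pi.lt_def.1 hx₀).2
  set y := x ᵥ* P
  have hy : 0 < y :=
    Pi.lt_def.2 ⟨vecMul_nonneg hx.1 fun i j => (hP i j).le, i, vecMul_apply_pos hx₀ hP i⟩
  set s := ∑ j, y j
  have hs : 0 < s := Fintype.sum_pos hy
  have hslack : 0 < y - l • x := lt_of_le_of_ne (sub_nonneg.2 hle) (Ne.symm (sub_ne_zero.2 hne))
  set g := (y - l • x) ᵥ* P
  have hyP : y ᵥ* P = l • y + g := by
    simp only [g, sub_vecMul, smul_vecMul]; abel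
  obtain ⟨j₀, -, hj₀⟩ := exists_min_image univ g ⟨i, mem_univ i⟩
  have hg₀ : 0 < g j₀ := vecMul_apply_pos hslack hP j₀
  have hx' := inv_sum_smul_mem_stdSimplex hy
  refine ⟨(l + s⁻¹ * g j₀, s⁻¹ • y), ⟨by positivity, hx', fun j => ?_⟩,
    lt_add_of_pos_right l (by positivity)⟩
  have hxj : s⁻¹ * y j ≤ 1 := (mem_Icc_of_mem_stdSimplex hx' j).2
  have hgj : s⁻¹ * g j₀ ≤ s⁻¹ * g j := by gcongr; exact hj₀ j (mem_univ j)
  simp only [Pi.smul_apply, smul_eq_mul, smul_vecMul, hyP, Pi.add_apply] at hxj ⊢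
  nlinarith [mul_le_mul_of_nonneg_left hxj (by positivity : 0 ≤ s⁻¹ * g j₀)]

theorem exists_vecMul_eq_sum_smul_of_pos [Nonempty ι] {P : Matrix ι ι ℝ}
    (hP : ∀ i j, 0 < P i j) :
    ∃ x ∈ stdSimplex ℝ ι, x ᵥ* P = (∑ j, (x ᵥ* P) j) • x := by
  have hP' : ∀ i j, 0 ≤ P i j := fun i j => (hP i j).le
  obtain ⟨⟨l, x⟩, hlx, hmax⟩ := (isCompact_collatzWielandtSet hP').exists_isMaxOn
    (collatzWielandtSet_nonempty hP') continuous_fst.continuousOn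
  have hfix : x ᵥ* P = l • x := by
    by_contra hne
    obtain ⟨p, hp, hlt⟩ := exists_gt_of_mem_collatzWielandtSet hP hlx hne
    exact (hmax hp).not_gt hlt
  exact ⟨x, hlx.2.1, eq_sum_of_vecMul_eq_smul hlx.2.1 hfix ▸ hfix⟩

lemma isClosed_setOf_exists_vecMul_eq_sum_smul :
    IsClosed {B : Matrix ι ι ℝ | ∃ x ∈ stdSimplex ℝ ι, x ᵥ* B = (∑ j, (x ᵥ* B) j) • x} := by
  have hS : IsClosed {p : Matrix ι ι ℝ × stdSimplex ℝ ι |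
      (p.2 : ι → ℝ) ᵥ* p.1 = (∑ j, ((p.2 : ι → ℝ) ᵥ* p.1) j) • (p.2 : ι → ℝ)} :=
    isClosed_eq (by fun_prop) (by fun_prop)
  convert isClosedMap_fst_of_compactSpace _ hS using 1
  ext B
  simp only [Set.mem_image, Set.mem_ofPred_eq, Prod.exists, Subtype.exists, exists_and_right,
    exists_eq_right]
  exact bex_def.symm

theorem exists_vecMul_eq_sum_smul [Nonempty ι] {B : Matrix ι ι ℝ} (hB : ∀ i j, 0 ≤ B i j) :
    ∃ x ∈ stdSimplex ℝ ι, x ᵥ* B = (∑ j, (x ᵥ* B) j) • x := by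
  have hlim : Tendsto (fun ε : ℝ => B + ε • of fun _ _ => 1) (𝓝[>] 0) (𝓝 B) := by
    have : Continuous fun ε : ℝ => B + ε • of fun (_ : ι) (_ : ι) => (1 : ℝ) := by fun_prop
    simpa using (this.tendsto 0).mono_left nhdsWithin_le_nhds
  refine isClosed_setOf_exists_vecMul_eq_sum_smul.mem_of_tendsto hlim ?_
  filter_upwards [self_mem_nhdsWithin] with ε (hε : 0 < ε)
  exact exists_vecMul_eq_sum_smul_of_pos fun i j => by
    simpa using add_pos_of_nonneg_of_pos (hB i j) hε

end PerronFrobenius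

/-- For `A` entrywise nonnegative, `c` nonnegative and nonzero, and `α > 0`, the map
`f(x) = (xA + αc) / (Σ_k (xA)_k + α c_k)` maps the unit simplex into itself and has a
fixed point there. -/
theorem stmt_19 {n : ℕ} (A : Matrix (Fin n) (Fin n) ℝ) (c : Fin n → ℝ)
    (hA : ∀ i j, 0 ≤ A i j) (hc : ∀ i, 0 ≤ c i) (hc0 : c ≠ 0)
    (α : ℝ) (hα : 0 < α) :
    (∀ x : Fin n → ℝ, (∀ i, 0 ≤ x i) → (∑ i, x i) = 1 →
      (∀ i, 0 ≤ ((∑ k, ((x ᵥ* A) k + α * c k))⁻¹ • (x ᵥ* A + α • c)) i) ∧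
      (∑ i, ((∑ k, ((x ᵥ* A) k + α * c k))⁻¹ • (x ᵥ* A + α • c)) i) = 1) ∧
    ∃ x : Fin n → ℝ, (∀ i, 0 ≤ x i) ∧ (∑ i, x i) = 1 ∧
      (∑ k, ((x ᵥ* A) k + α * c k)) • x = x ᵥ* A + α • c := by
  have hαc : 0 < α • c := smul_pos hα (lt_of_le_of_ne hc (Ne.symm hc0))
  refine ⟨fun x hx _ => ?_, ?_⟩
  · exact inv_sum_smul_mem_stdSimplex (add_pos_of_nonneg_of_pos (vecMul_nonneg hx hA) hαc)
  · obtain ⟨i₀, -⟩ := Function.ne_iff.1 hc0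
    have : Nonempty (Fin n) := ⟨i₀⟩
    obtain ⟨x, hx, hfix⟩ := exists_vecMul_eq_sum_smul (B := A + α • vecMulVec 1 c)
      fun i j => add_nonneg (hA i j) (mul_nonneg hα.le (by simpa [vecMulVec] using hc j))
    have hxB : x ᵥ* (A + α • vecMulVec 1 c) = x ᵥ* A + α • c := by
      rw [vecMul_add, vecMul_smul, vecMul_vecMulVec, dotProduct_one, hx.2, one_smul]
    rw [hxB] at hfix
    exact ⟨x, hx.1, hx.2, by simpa using hfix.symm⟩
end
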